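/- arXiv:1808.05156 — 10 statements merged into one kernel-verified Lean document; each statement's English description precedes it below -/
import Mathlib

section
/- Let n, T ∈ ℕ with n ≥ 1. For each t < T let A_t be an invertible 2×2 real matrix, and define B_0 = I (the 2×2 identity matrix) and B_{t+1} = A_t·B_t. For each t < T let k_t ∈ {1,…,n} be a coordinate, Δ_t ∈ ℝ a scalar, and D_t ∈ ℝ² a vector. Let y_0, z_0 ∈ ℝⁿ be given, and define y_t, z_t ∈ ℝⁿ recursively by: for each coordinate j, (y_{t+1,j}, z_{t+1,j})ᵀ = A_t·(y_{t,j}, z_{t,j})ᵀ + (Δ_t·D_t if j = k_t, and the zero vector otherwise). Then for every t ≤ T and every coordinate j: (y_{t,j}, z_{t,j})ᵀ = B_t·( (y_{0,j}, z_{0,j})ᵀ + Σ_{l < t, k_l = j} Δ_l·B_{l+1}⁻¹·D_l ). -/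
/-!
Writing `B_t := A_{t-1} ⋯ A_0`, the affine recurrence `x_{t+1} = A_t x_t + f_t` is solved by
the discrete variation-of-constants formula `x_t = B_t (x_0 + ∑_{l<t} B_{l+1}⁻¹ f_l)`: the
homogeneous part is carried by `B_t`, and each inhomogeneity `f_l`, once pulled back through
`B_{l+1}`, is transported forward by `B_t` alongside `x_0`. For the coordinate-descent iterates,
coordinate `j` receives the inhomogeneity `Δ_l D_l` exactly at the steps `l` with `k_l = j`.
-/

open Matrix

theorem isUnit_of_forall_lt_succ_eq_mul {M : Type*} [Monoid M] {T : ℕ} {A B : ℕ → M}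
    (hA : ∀ t < T, IsUnit (A t)) (hB0 : B 0 = 1) (hBs : ∀ t < T, B (t + 1) = A t * B t) :
    ∀ t ≤ T, IsUnit (B t) := by
  intro t ht
  induction t with
  | zero => exact hB0 ▸ isUnit_one
  | succ s ih => exact hBs s ht ▸ (hA s ht).mul (ih (Nat.le_of_succ_le ht))

theorem Matrix.mulVec_nonsing_inv_mulVec {m R : Type*} [Fintype m] [DecidableEq m] [CommRing R]
    {M : Matrix m m R} (hM : IsUnit M) (v : m → R) : M *ᵥ (M⁻¹ *ᵥ v) = v := by
  rw [mulVec_mulVec, mul_nonsing_inv _ ((isUnit_iff_isUnit_det M).mp hM), one_mulVec]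

theorem variation_of_constants {m R : Type*} [Fintype m] [DecidableEq m] [CommRing R] {T : ℕ}
    {A B : ℕ → Matrix m m R} (hA : ∀ t < T, IsUnit (A t))
    (hB0 : B 0 = 1) (hBs : ∀ t < T, B (t + 1) = A t * B t)
    {x f : ℕ → m → R} (hx : ∀ t < T, x (t + 1) = A t *ᵥ x t + f t) :
    ∀ t ≤ T, x t = B t *ᵥ (x 0 + ∑ l ∈ Finset.range t, (B (l + 1))⁻¹ *ᵥ f l) := by
  have hBu := isUnit_of_forall_lt_succ_eq_mul hA hB0 hBs
  intro t ht
  induction t with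
  | zero => simp [hB0]
  | succ s ih =>
    rw [hx s ht, ih (Nat.le_of_succ_le ht), mulVec_mulVec, ← hBs s ht,
      Finset.sum_range_succ, ← add_assoc, mulVec_add (B (s + 1)) _ (_ *ᵥ f s),
      mulVec_nonsing_inv_mulVec (hBu (s + 1) ht)]

theorem stmt1_general (n T : ℕ)
    (A : ℕ → Matrix (Fin 2) (Fin 2) ℝ) (hA : ∀ t < T, IsUnit (A t))
    (B : ℕ → Matrix (Fin 2) (Fin 2) ℝ)
    (hB0 : B 0 = 1) (hBs : ∀ t < T, B (t + 1) = A t * B t)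
    (k : ℕ → Fin n) (Δ : ℕ → ℝ) (D : ℕ → Fin 2 → ℝ)
    (y z : ℕ → Fin n → ℝ)
    (hrec : ∀ t < T, ∀ j : Fin n,
      ![y (t + 1) j, z (t + 1) j]
        = (A t).mulVec ![y t j, z t j] + (if j = k t then Δ t • D t else 0)) :
    ∀ t ≤ T, ∀ j : Fin n,
      ![y t j, z t j]
        = (B t).mulVec (![y 0 j, z 0 j]
            + ∑ l ∈ (Finset.range t).filter (fun l => k l = j),
                Δ l • (B (l + 1))⁻¹.mulVec (D l)) := by
  intro t ht j
  have h := variation_of_constants hA hB0 hBs (x := fun t => ![y t j, z t j])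
    (f := fun t => if j = k t then Δ t • D t else 0) (fun t ht => hrec t ht j) t ht
  simp_rw [h, Finset.sum_filter, eq_comm (a := k _), apply_ite (mulVec _), mulVec_zero,
    mulVec_smul]

/-- The efficient implementation of accelerated coordinate descent produces the same
iterates as the basic iteration. -/
theorem stmt1 (n T : ℕ) (hn : 1 ≤ n)
    (A : ℕ → Matrix (Fin 2) (Fin 2) ℝ) (hA : ∀ t < T, IsUnit (A t))
    (B : ℕ → Matrix (Fin 2) (Fin 2) ℝ)
    (hB0 : B 0 = 1) (hBs : ∀ t < T, B (t + 1) = A t * B t)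
    (k : ℕ → Fin n) (Δ : ℕ → ℝ) (D : ℕ → Fin 2 → ℝ)
    (y z : ℕ → Fin n → ℝ)
    (hrec : ∀ t < T, ∀ j : Fin n,
      ![y (t + 1) j, z (t + 1) j]
        = (A t).mulVec ![y t j, z t j] + (if j = k t then Δ t • D t else 0)) :
    ∀ t ≤ T, ∀ j : Fin n,
      ![y t j, z t j]
        = (B t).mulVec (![y 0 j, z 0 j]
            + ∑ l ∈ (Finset.range t).filter (fun l => k l = j),
                Δ l • (B (l + 1))⁻¹.mulVec (D l)) :=
  stmt1_general n T A hA B hB0 hBs k Δ D y z hrec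
end

section
/- Let T, q, n ∈ ℕ with T ≥ 1, q ≥ 1, n ≥ 1, let τ ∈ (0,1] and L̄ > 0. For t ∈ {0,…,T−1}, let φ_t, Γ_t, a_t, d_t, e_t be reals with 0 < φ_t, τφ_t < 1, Γ_t > 0, a_t > 0, d_t ≥ 0, e_t ≥ 0. Set W_t := Π_{l=t+1}^{T−1}(1 − τφ_l), Ξ := max_{0 ≤ t ≤ T−1} 216·q²·L̄²·n·φ_t²/Γ_t², and Φ_a := min over t ∈ {0,…,T−1} and s ∈ [t−2q, t+2q] ∩ {0,…,T−1} of (a_s·W_s)/(a_t·W_t). Suppose that for every t ∈ {0,…,T−1}: d_t ≤ (54·q·L̄²·n·φ_t²/Γ_t²)·Σ_{s ∈ [t−2q, t+2q] ∩ {0,…,T−1}, s ≠ t} (d_s + e_s), and suppose Φ_a > Ξ. Then: Σ_{t=0}^{T−1} a_t·W_t·d_t ≤ (Ξ/(Φ_a − Ξ))·Σ_{t=0}^{T−1} a_t·W_t·e_t. -/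
/-!
Write `w t = a t * W t` and `c t` for the coefficient in the hypothesis on `d t`. Multiplying
that hypothesis by `Φa * w t` and using `Φa * w t ≤ w s` inside the window gives
`Φa * w t * d t ≤ c t * ∑ₛ w s * (d s + e s)`. Summing over `t` and exchanging the order of
summation (the window relation is symmetric), each `w s * (d s + e s)` is weighted by at most
`4q` coefficients `c t`, and `4q * c t` is one of the terms whose maximum is `Ξ`.
Hence `Φa * ∑ w d ≤ Ξ * ∑ w (d + e)`, which rearranges to the claim since `Φa > Ξ`.
-/

open Finset

theorem Finset.sum_le_of_card_le_of_forall_mul_le {ι 𝕜 : Type*} [Field 𝕜] [LinearOrder 𝕜]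
    [IsStrictOrderedRing 𝕜] {s : Finset ι} {f : ι → 𝕜} {m b : 𝕜} (hb : 0 ≤ b)
    (hcard : (#s : 𝕜) ≤ m) (hf : ∀ i ∈ s, m * f i ≤ b) : ∑ i ∈ s, f i ≤ b := by
  rcases s.eq_empty_or_nonempty with rfl | hs
  · simpa using hb
  have hm : 0 < m := lt_of_lt_of_le (by exact_mod_cast hs.card_pos) hcard
  calc ∑ i ∈ s, f i ≤ #s • (b / m) :=
        sum_le_card_nsmul _ _ _ fun i hi => (le_div_iff₀' hm).2 (hf i hi)
    _ ≤ m * (b / m) := by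
        rw [nsmul_eq_mul]; exact mul_le_mul_of_nonneg_right hcard (div_nonneg hb hm.le)
    _ = b := mul_div_cancel₀ b hm.ne'

section Amortization

variable {ι : Type*} {S : Finset ι} {R : ι → ι → Prop} [DecidableRel R] {w c d e : ι → ℝ}
  {Φ ξ : ℝ}

theorem mul_weight_mul_le_mul_sum_filter {t : ι} (hΦ : 0 ≤ Φ) (hwt : 0 ≤ w t) (hct : 0 ≤ c t)
    (hde : ∀ s ∈ S, 0 ≤ d s + e s) (hratio : ∀ s ∈ S, R t s → Φ * w t ≤ w s)
    (hdt : d t ≤ c t * ∑ s ∈ S with R t s, (d s + e s)) :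
    Φ * (w t * d t) ≤ c t * ∑ s ∈ S with R t s, w s * (d s + e s) :=
  calc Φ * (w t * d t) ≤ Φ * w t * (c t * ∑ s ∈ S with R t s, (d s + e s)) := by
        rw [← mul_assoc]; exact mul_le_mul_of_nonneg_left hdt (mul_nonneg hΦ hwt)
    _ = c t * ∑ s ∈ S with R t s, Φ * w t * (d s + e s) := by simp_rw [mul_sum]; ring_nf
    _ ≤ c t * ∑ s ∈ S with R t s, w s * (d s + e s) := by
        refine mul_le_mul_of_nonneg_left (sum_le_sum fun s hs => ?_) hct
        obtain ⟨hsS, hts⟩ := mem_filter.1 hs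
        exact mul_le_mul_of_nonneg_right (hratio s hsS hts) (hde s hsS)

theorem mul_sum_weight_mul_le_of_le_mul_sum_filter (hR : ∀ t s, R t s → R s t) (hΦ : 0 ≤ Φ)
    (hw : ∀ t ∈ S, 0 ≤ w t) (hc : ∀ t ∈ S, 0 ≤ c t) (hde : ∀ s ∈ S, 0 ≤ d s + e s)
    (hratio : ∀ t ∈ S, ∀ s ∈ S, R t s → Φ * w t ≤ w s)
    (hsum : ∀ s ∈ S, ∑ t ∈ S with R s t, c t ≤ ξ)
    (hd : ∀ t ∈ S, d t ≤ c t * ∑ s ∈ S with R t s, (d s + e s)) :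
    Φ * ∑ t ∈ S, w t * d t ≤ ξ * ∑ s ∈ S, w s * (d s + e s) := by
  calc Φ * ∑ t ∈ S, w t * d t
      ≤ ∑ t ∈ S, c t * ∑ s ∈ S with R t s, w s * (d s + e s) := by
        rw [mul_sum]
        exact sum_le_sum fun t ht => mul_weight_mul_le_mul_sum_filter hΦ (hw t ht) (hc t ht) hde
          (hratio t ht) (hd t ht)
    _ = ∑ s ∈ S, (∑ t ∈ S with R s t, c t) * (w s * (d s + e s)) := by
        simp_rw [mul_sum, sum_mul]
        refine sum_comm' fun t s => ?_
        simp only [mem_filter]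
        constructor
        · rintro ⟨ht, hs, hts⟩
          exact ⟨⟨ht, hR t s hts⟩, hs⟩
        · rintro ⟨⟨ht, hst⟩, hs⟩
          exact ⟨ht, hs, hR s t hst⟩
    _ ≤ ξ * ∑ s ∈ S, w s * (d s + e s) := by
        rw [mul_sum]
        exact sum_le_sum fun s hs =>
          mul_le_mul_of_nonneg_right (hsum s hs) (mul_nonneg (hw s hs) (hde s hs))

end Amortization

theorem card_filter_window_le (S : Finset ℕ) (q t : ℕ) :
    #(S.filter fun s : ℕ => (t : ℤ) - 2 * q ≤ (s : ℤ) ∧ (s : ℤ) ≤ (t : ℤ) + 2 * q ∧ s ≠ t)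
      ≤ 4 * q := by
  have hsub : (S.filter fun s : ℕ => (t : ℤ) - 2 * q ≤ (s : ℤ) ∧ (s : ℤ) ≤ (t : ℤ) + 2 * q ∧ s ≠ t)
      ⊆ (Ico (t - 2 * q) (t + 2 * q + 1)).erase t := by
    intro s hs
    simp only [mem_filter, mem_erase, mem_Ico] at hs ⊢
    omega
  have hmem : t ∈ Ico (t - 2 * q) (t + 2 * q + 1) := by rw [mem_Ico]; omega
  have := card_le_card hsub
  rw [card_erase_of_mem hmem, Nat.card_Ico] at this
  omega

theorem stmt2_general (T q n : ℕ)
    (τ Lbar : ℝ)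
    (φ Γ a d e : ℕ → ℝ)
    (hτφ : ∀ t < T, τ * φ t < 1)
    (ha : ∀ t < T, 0 < a t)
    (hd0 : ∀ t < T, 0 ≤ d t) (he0 : ∀ t < T, 0 ≤ e t)
    (W : ℕ → ℝ) (hW : ∀ t, W t = ∏ l ∈ Finset.Ico (t + 1) T, (1 - τ * φ l))
    (Ξ Φa : ℝ)
    (hΞ : IsGreatest
      {x : ℝ | ∃ t < T, x = 216 * (q : ℝ) ^ 2 * Lbar ^ 2 * (n : ℝ) * φ t ^ 2 / Γ t ^ 2} Ξ)
    (hΦa : IsLeast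
      {x : ℝ | ∃ t < T, ∃ s < T, (t : ℤ) - 2 * q ≤ (s : ℤ) ∧ (s : ℤ) ≤ (t : ℤ) + 2 * q ∧
          x = (a s * W s) / (a t * W t)} Φa)
    (hd : ∀ t < T, d t ≤ (54 * (q : ℝ) * Lbar ^ 2 * (n : ℝ) * φ t ^ 2 / Γ t ^ 2) *
        ∑ s ∈ (Finset.range T).filter
          (fun s : ℕ => (t : ℤ) - 2 * q ≤ (s : ℤ) ∧ (s : ℤ) ≤ (t : ℤ) + 2 * q ∧ s ≠ t),
          (d s + e s))
    (hΦΞ : Φa > Ξ) :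
    ∑ t ∈ Finset.range T, a t * W t * d t
      ≤ (Ξ / (Φa - Ξ)) * ∑ t ∈ Finset.range T, a t * W t * e t := by
  set c : ℕ → ℝ := fun t => 54 * (q : ℝ) * Lbar ^ 2 * (n : ℝ) * φ t ^ 2 / Γ t ^ 2
  have hw : ∀ t < T, 0 < a t * W t := fun t ht => mul_pos (ha t ht) <| by
    rw [hW]
    exact prod_pos fun l hl => sub_pos.2 (hτφ l (mem_Ico.1 hl).2)
  have hΞ0 : 0 ≤ Ξ := by
    obtain ⟨t, -, rfl⟩ := hΞ.1
    positivity
  have hratio : ∀ t ∈ range T, ∀ s ∈ range T,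
      (t : ℤ) - 2 * q ≤ (s : ℤ) ∧ (s : ℤ) ≤ (t : ℤ) + 2 * q ∧ s ≠ t →
        Φa * (a t * W t) ≤ a s * W s := fun t ht s hs hts =>
    (le_div_iff₀ (hw t (mem_range.1 ht))).1 <|
      hΦa.2 ⟨t, mem_range.1 ht, s, mem_range.1 hs, hts.1, hts.2.1, rfl⟩
  have hsum : ∀ s ∈ range T, ∑ t ∈ (range T).filter
      (fun t : ℕ => (s : ℤ) - 2 * q ≤ (t : ℤ) ∧ (t : ℤ) ≤ (s : ℤ) + 2 * q ∧ t ≠ s), c t ≤ Ξ :=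
    fun s _ => sum_le_of_card_le_of_forall_mul_le (m := 4 * (q : ℝ)) hΞ0
      (by exact_mod_cast card_filter_window_le _ q s)
      (fun t ht => le_of_eq_of_le (by ring) (hΞ.2 ⟨t, mem_range.1 (mem_filter.1 ht).1, rfl⟩))
  have key := mul_sum_weight_mul_le_of_le_mul_sum_filter (fun t s h => by omega)
    (hΞ0.trans hΦΞ.le) (fun t ht => (hw t (mem_range.1 ht)).le) (fun t _ => by positivity)
    (fun s hs => add_nonneg (hd0 s (mem_range.1 hs)) (he0 s (mem_range.1 hs)))
    hratio hsum (fun t ht => hd t (mem_range.1 ht))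
  simp only [mul_add, sum_add_distrib] at key
  rw [div_mul_eq_mul_div, le_div_iff₀ (sub_pos.2 hΦΞ)]
  linarith

/-- The amortization lemma bounding the error terms by the progress terms. -/
theorem stmt2 (T q n : ℕ) (hT : 1 ≤ T) (hq : 1 ≤ q) (hn : 1 ≤ n)
    (τ Lbar : ℝ) (hτ0 : 0 < τ) (hτ1 : τ ≤ 1) (hL : 0 < Lbar)
    (φ Γ a d e : ℕ → ℝ)
    (hφ : ∀ t < T, 0 < φ t) (hτφ : ∀ t < T, τ * φ t < 1)
    (hΓ : ∀ t < T, 0 < Γ t) (ha : ∀ t < T, 0 < a t)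
    (hd0 : ∀ t < T, 0 ≤ d t) (he0 : ∀ t < T, 0 ≤ e t)
    (W : ℕ → ℝ) (hW : ∀ t, W t = ∏ l ∈ Finset.Ico (t + 1) T, (1 - τ * φ l))
    (Ξ Φa : ℝ)
    (hΞ : IsGreatest
      {x : ℝ | ∃ t < T, x = 216 * (q : ℝ) ^ 2 * Lbar ^ 2 * (n : ℝ) * φ t ^ 2 / Γ t ^ 2} Ξ)
    (hΦa : IsLeast
      {x : ℝ | ∃ t < T, ∃ s < T, (t : ℤ) - 2 * q ≤ (s : ℤ) ∧ (s : ℤ) ≤ (t : ℤ) + 2 * q ∧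
          x = (a s * W s) / (a t * W t)} Φa)
    (hd : ∀ t < T, d t ≤ (54 * (q : ℝ) * Lbar ^ 2 * (n : ℝ) * φ t ^ 2 / Γ t ^ 2) *
        ∑ s ∈ (Finset.range T).filter
          (fun s : ℕ => (t : ℤ) - 2 * q ≤ (s : ℤ) ∧ (s : ℤ) ≤ (t : ℤ) + 2 * q ∧ s ≠ t),
          (d s + e s))
    (hΦΞ : Φa > Ξ) :
    ∑ t ∈ Finset.range T, a t * W t * d t
      ≤ (Ξ / (Φa - Ξ)) * ∑ t ∈ Finset.range T, a t * W t * e t :=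
  stmt2_general T q n τ Lbar φ Γ a d e hτφ ha hd0 he0 W hW Ξ Φa hΞ hΦa hd hΦΞ
end

section
/- Let n, q, T ∈ ℕ with q ≥ 1 and n ≥ 50q, let τ ∈ (0,1], Υ > 0, L̄ > 0, and c > 0. Let φ : ℕ → ℝ be a nonincreasing sequence with 0 < φ_l ≤ 1/n and φ_{l+1} ≥ (1 − 1/(2n))·φ_l for all l, and set Γ_l := c·√(n·φ_l). For 0 ≤ t ≤ T define W_t := Π_{l=t+1}^{T}(1 − τφ_l), b_t := ((3/Υ + 2nφ_t)/(2Γ_t))·540·q²·L̄²·n·φ_t², and c_t := 12·Γ_t·φ_t. Then: (i) for all 0 ≤ s,t ≤ T with |s−t| ≤ 4q, b_s·W_s ≥ (4/5)·b_t·W_t; (ii) for all 0 ≤ s,t ≤ T with |s−t| ≤ 2q, c_s·W_s ≥ (4/5)·c_t·W_t; and (iii) for all integers s,t ≥ 0 with t − 3q ≤ s ≤ t + 2q, φ_s²·Γ_t² ≤ (6/5)·φ_t²·Γ_s². -/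
/-!
The factors `1 - τ φ_l` lie in `[1 - 1/n, 1]`, so `W` is nondecreasing and, by Bernoulli's
inequality, `W_s ≥ (1 - 4q/n) W_t ≥ (4/5) W_t` for `s ≤ t ≤ s + 4q`. Likewise
`φ_{l+1} ≥ (1 - 1/(2n)) φ_l` gives `φ_s ≥ (1 - 4q/(2n)) φ_t ≥ (24/25) φ_t` for `t ≤ s ≤ t + 4q`.
As `Γ_t ∝ √φ_t`, both `b_t ∝ (3/Υ + 2nφ_t) φ_t^{3/2}` and `c_t ∝ φ_t^{3/2}` are increasing in
`φ_t`, and shrinking `φ_t` by a factor `r ≤ 1` shrinks them by at most `r^3`, with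
`(24/25)^3 ≥ 4/5`. So for `s ≥ t` the weight `W` grows while `b` loses at most `4/5`, and for
`s < t` the roles are exchanged. For `ξ`, `Γ_t²/Γ_s² = φ_t/φ_s`, so `φ_s ≤ (25/24) φ_t` suffices.
-/

open Finset

theorem pow_mul_le_of_mul_le_succ {φ : ℕ → ℝ} {a : ℝ} (ha : 0 ≤ a)
    (h : ∀ l, a * φ l ≤ φ (l + 1)) (t k : ℕ) : a ^ k * φ t ≤ φ (t + k) := by
  induction k with
  | zero => simp
  | succ k ih =>
    calc a ^ (k + 1) * φ t = a * (a ^ k * φ t) := by ring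
      _ ≤ a * φ (t + k) := mul_le_mul_of_nonneg_left ih ha
      _ ≤ φ (t + k + 1) := h (t + k)

theorem one_sub_mul_le_of_mul_le_succ {φ : ℕ → ℝ} {ε : ℝ} (hε0 : 0 ≤ ε) (hε1 : ε ≤ 1)
    (hφ : ∀ l, 0 ≤ φ l) (h : ∀ l, (1 - ε) * φ l ≤ φ (l + 1)) {m s t : ℕ} (hts : t ≤ s)
    (hs : s ≤ t + m) : (1 - m * ε) * φ t ≤ φ s := by
  obtain ⟨k, rfl⟩ := Nat.exists_eq_add_of_le hts
  have hkm : (k : ℝ) ≤ m := by exact_mod_cast (by omega : k ≤ m)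
  have bernoulli : 1 - k * ε ≤ (1 - ε) ^ k := by
    simpa [sub_eq_add_neg] using one_add_mul_sub_le_pow (a := 1 - ε) (by linarith) k
  calc (1 - m * ε) * φ t ≤ (1 - ε) ^ k * φ t :=
        mul_le_mul_of_nonneg_right (by nlinarith) (hφ t)
    _ ≤ φ (t + k) := pow_mul_le_of_mul_le_succ (by linarith) h t k

theorem one_sub_card_mul_le_prod {ι : Type*} {s : Finset ι} {f : ι → ℝ} {ε : ℝ} (hε : ε ≤ 1)
    (hf : ∀ i ∈ s, 1 - ε ≤ f i) : 1 - #s * ε ≤ ∏ i ∈ s, f i := by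
  calc 1 - #s * ε ≤ (1 - ε) ^ #s := by
        simpa [sub_eq_add_neg] using one_add_mul_sub_le_pow (a := 1 - ε) (by linarith) #s
    _ = ∏ _i ∈ s, (1 - ε) := (prod_const _).symm
    _ ≤ ∏ i ∈ s, f i := prod_le_prod (fun _ _ => by linarith) hf

section TailProduct

variable {f : ℕ → ℝ} {T : ℕ}

theorem monotone_prod_Ico_succ (h0 : ∀ l, 0 ≤ f l) (h1 : ∀ l, f l ≤ 1) :
    Monotone fun t => ∏ l ∈ Ico (t + 1) (T + 1), f l := by
  intro s t hst
  dsimp only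
  have hsub : Ico (t + 1) (T + 1) ⊆ Ico (s + 1) (T + 1) := Ico_subset_Ico_left (by omega)
  rw [← prod_sdiff hsub]
  exact mul_le_of_le_one_left (prod_nonneg fun l _ => h0 l) (prod_le_one (fun l _ => h0 l)
    fun l _ => h1 l)

theorem one_sub_mul_prod_Ico_succ_le {ε : ℝ} (hε0 : 0 ≤ ε) (hε1 : ε ≤ 1)
    (hf : ∀ l, 1 - ε ≤ f l) {m s t : ℕ} (hst : s ≤ t) (ht : t ≤ s + m) (htT : t ≤ T) :
    (1 - m * ε) * ∏ l ∈ Ico (t + 1) (T + 1), f l ≤ ∏ l ∈ Ico (s + 1) (T + 1), f l := by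
  rw [← prod_Ico_consecutive f (by omega : s + 1 ≤ t + 1) (by omega : t + 1 ≤ T + 1)]
  have hcard : ((#(Ico (s + 1) (t + 1)) : ℕ) : ℝ) ≤ m := by
    rw [Nat.card_Ico, Nat.cast_le]
    omega
  refine mul_le_mul_of_nonneg_right ?_ (prod_nonneg fun l _ => (by linarith [hf l]))
  have := one_sub_card_mul_le_prod (s := Ico (s + 1) (t + 1)) hε1 fun l _ => hf l
  nlinarith

end TailProduct

theorem mul_le_of_ratio_of_le_add {φ : ℕ → ℝ} {n q : ℕ} (hq : 1 ≤ q) (hn : 50 * q ≤ n)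
    (hφ : ∀ l, 0 ≤ φ l) (hratio : ∀ l, φ (l + 1) ≥ (1 - 1 / (2 * (n : ℝ))) * φ l) {s t : ℕ}
    (hts : t ≤ s) (hs : s ≤ t + 4 * q) : 24 / 25 * φ t ≤ φ s := by
  have hn1 : (1 : ℝ) ≤ n := by exact_mod_cast (show 1 ≤ n by omega)
  have hnq : 50 * (q : ℝ) ≤ n := by exact_mod_cast hn
  refine le_trans ?_ (one_sub_mul_le_of_mul_le_succ (by positivity)
    (by rw [div_le_one (by positivity)]; linarith) hφ hratio hts hs)
  refine mul_le_mul_of_nonneg_right ?_ (hφ t)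
  rw [mul_one_div, le_sub_comm, div_le_iff₀ (by positivity)]
  push_cast
  linarith

theorem mul_prod_Ico_succ_le_of_le_add {f : ℕ → ℝ} {n q T : ℕ} (hq : 1 ≤ q) (hn : 50 * q ≤ n)
    (hf : ∀ l, 1 - 1 / (n : ℝ) ≤ f l) {s t : ℕ} (hst : s ≤ t) (ht : t ≤ s + 4 * q)
    (htT : t ≤ T) :
    4 / 5 * ∏ l ∈ Ico (t + 1) (T + 1), f l ≤ ∏ l ∈ Ico (s + 1) (T + 1), f l := by
  have hn1 : (1 : ℝ) ≤ n := by exact_mod_cast (show 1 ≤ n by omega)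
  have hnq : 50 * (q : ℝ) ≤ n := by exact_mod_cast hn
  have hε1 : 1 / (n : ℝ) ≤ 1 := by rw [one_div]; exact Nat.cast_inv_le_one n
  refine le_trans ?_ (one_sub_mul_prod_Ico_succ_le (by positivity) hε1 hf hst ht htT)
  refine mul_le_mul_of_nonneg_right ?_ (prod_nonneg fun l _ => by linarith [hf l])
  rw [mul_one_div, le_sub_comm, div_le_iff₀ (by positivity)]
  push_cast
  linarith

theorem mul_le_mul_of_abs_sub_le {u W : ℕ → ℝ} {T k : ℕ} {ρ : ℝ} (hu0 : ∀ t, 0 ≤ u t)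
    (hW0 : ∀ t, 0 ≤ W t) (hu : Antitone u) (hW : Monotone W)
    (hu_step : ∀ s t, t ≤ s → s ≤ t + k → ρ * u t ≤ u s)
    (hW_step : ∀ s t, s ≤ t → t ≤ s + k → t ≤ T → ρ * W t ≤ W s)
    {s t : ℕ} (htT : t ≤ T) (hst : |(s : ℤ) - t| ≤ k) : ρ * (u t * W t) ≤ u s * W s := by
  rw [abs_le] at hst
  rcases le_total t s with hts | hst'
  · calc ρ * (u t * W t) = (ρ * u t) * W t := by ring
      _ ≤ u s * W t := mul_le_mul_of_nonneg_right (hu_step s t hts (by omega)) (hW0 t)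
      _ ≤ u s * W s := mul_le_mul_of_nonneg_left (hW hts) (hu0 s)
  · calc ρ * (u t * W t) = u t * (ρ * W t) := by ring
      _ ≤ u t * W s := mul_le_mul_of_nonneg_left (hW_step s t hst' (by omega) htT) (hu0 t)
      _ ≤ u s * W s := mul_le_mul_of_nonneg_right (hu hst') (hW0 s)

theorem mul_le_mul_of_abs_sub_le_of_scaling {φ u W : ℕ → ℝ} {T k e : ℕ} {r ρ : ℝ}
    (hφ : Antitone φ) (hφ_step : ∀ s t, t ≤ s → s ≤ t + k → r * φ t ≤ φ s) (hr0 : 0 ≤ r)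
    (hr1 : r ≤ 1) (hρ : ρ ≤ r ^ e) (hu0 : ∀ t, 0 ≤ u t)
    (hu : ∀ a s t, 0 ≤ a → a ≤ 1 → a * φ t ≤ φ s → a ^ e * u t ≤ u s)
    (hW0 : ∀ t, 0 ≤ W t) (hW : Monotone W)
    (hW_step : ∀ s t, s ≤ t → t ≤ s + k → t ≤ T → ρ * W t ≤ W s)
    {s t : ℕ} (htT : t ≤ T) (hst : |(s : ℤ) - t| ≤ k) : ρ * (u t * W t) ≤ u s * W s :=
  mul_le_mul_of_abs_sub_le hu0 hW0
    (fun s t h => by simpa using hu 1 s t zero_le_one le_rfl (by simpa using hφ h)) hW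
    (fun s t hts hs => (mul_le_mul_of_nonneg_right hρ (hu0 t)).trans
      (hu r s t hr0 hr1 (hφ_step s t hts hs)))
    hW_step htT hst

theorem sq_mul_mul_sqrt_le {r x y : ℝ} (hr0 : 0 ≤ r) (hr1 : r ≤ 1) (hx : 0 ≤ x)
    (hxy : r * x ≤ y) : r ^ 2 * (x * √x) ≤ y * √y := by
  have hr : r ≤ √r := (Real.le_sqrt hr0 hr0).2 (by nlinarith)
  have hsqrt : r * √x ≤ √y :=
    calc r * √x ≤ √r * √x := mul_le_mul_of_nonneg_right hr (Real.sqrt_nonneg x)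
      _ = √(r * x) := (Real.sqrt_mul hr0 x).symm
      _ ≤ √y := Real.sqrt_le_sqrt hxy
  calc r ^ 2 * (x * √x) = (r * x) * (r * √x) := by ring
    _ ≤ y * √y := mul_le_mul hxy hsqrt (by positivity) (by nlinarith)

theorem pow_three_mul_le {A B r x y : ℝ} (hA : 0 ≤ A) (hB : 0 ≤ B) (hr0 : 0 ≤ r) (hr1 : r ≤ 1)
    (hx : 0 ≤ x) (hxy : r * x ≤ y) :
    r ^ 3 * ((A + B * x) * (x * √x)) ≤ (A + B * y) * (y * √y) := by
  have hy : 0 ≤ y := (mul_nonneg hr0 hx).trans hxy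
  have hlin : r * (A + B * x) ≤ A + B * y := by nlinarith
  calc r ^ 3 * ((A + B * x) * (x * √x)) = (r * (A + B * x)) * (r ^ 2 * (x * √x)) := by ring
    _ ≤ (A + B * y) * (y * √y) :=
      mul_le_mul hlin (sq_mul_mul_sqrt_le hr0 hr1 hx hxy) (by positivity) (by nlinarith)

section Scaling

variable {c m r x y : ℝ}

theorem sq_mul_mul_sqrt_mul_le {K : ℝ} (hK : 0 ≤ K) (hc : 0 ≤ c) (hm : 0 ≤ m) (hr0 : 0 ≤ r)
    (hr1 : r ≤ 1) (hx : 0 ≤ x) (hxy : r * x ≤ y) :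
    r ^ 2 * (K * (c * √(m * x)) * x) ≤ K * (c * √(m * y)) * y := by
  have key : ∀ z, K * (c * √(m * z)) * z = K * c * √m * (z * √z) := fun z => by
    rw [Real.sqrt_mul hm]
    ring
  rw [key, key, mul_left_comm]
  exact mul_le_mul_of_nonneg_left (sq_mul_mul_sqrt_le hr0 hr1 hx hxy) (by positivity)

theorem pow_three_mul_div_sqrt_mul_le {A B K : ℝ} (hA : 0 ≤ A) (hB : 0 ≤ B) (hK : 0 ≤ K)
    (hc : 0 < c) (hm : 0 < m) (hr0 : 0 ≤ r) (hr1 : r ≤ 1) (hx : 0 < x) (hy : 0 < y)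
    (hxy : r * x ≤ y) :
    r ^ 3 * ((A + B * x) / (2 * (c * √(m * x))) * (K * x ^ 2)) ≤
      (A + B * y) / (2 * (c * √(m * y))) * (K * y ^ 2) := by
  have key : ∀ z, 0 < z →
      (A + B * z) / (2 * (c * √(m * z))) * (K * z ^ 2) =
        K / (2 * c * √m) * ((A + B * z) * (z * √z)) := fun z hz => by
    have : 0 < √z := Real.sqrt_pos.2 hz
    have : 0 < √m := Real.sqrt_pos.2 hm
    rw [Real.sqrt_mul hm.le]
    field_simp
    rw [Real.sq_sqrt hz.le]
    ring
  rw [key x hx, key y hy, mul_left_comm]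
  exact mul_le_mul_of_nonneg_left (pow_three_mul_le hA hB hr0 hr1 hx.le hxy) (by positivity)

theorem sq_mul_sq_le_of_le_mul {ρ : ℝ} (hm : 0 ≤ m) (hx : 0 ≤ x) (hy : 0 ≤ y)
    (h : x ≤ ρ * y) : x ^ 2 * (c * √(m * y)) ^ 2 ≤ ρ * (y ^ 2 * (c * √(m * x)) ^ 2) := by
  rw [mul_pow, mul_pow, Real.sq_sqrt (by positivity), Real.sq_sqrt (by positivity)]
  have := mul_le_mul_of_nonneg_left h (by positivity : 0 ≤ c ^ 2 * m * x * y)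
  linarith

end Scaling

theorem stmt3_general (n q T : ℕ) (hq : 1 ≤ q) (hn : 50 * q ≤ n)
    (τ Υ Lbar c : ℝ) (hτ0 : 0 < τ) (hτ1 : τ ≤ 1) (hΥ : 0 < Υ) (hc : 0 < c)
    (φ : ℕ → ℝ) (hmono : ∀ l, φ (l + 1) ≤ φ l)
    (hpos : ∀ l, 0 < φ l) (hub : ∀ l, φ l ≤ 1 / (n : ℝ))
    (hratio : ∀ l, φ (l + 1) ≥ (1 - 1 / (2 * (n : ℝ))) * φ l)
    (Γ : ℕ → ℝ) (hΓ : ∀ l, Γ l = c * Real.sqrt ((n : ℝ) * φ l))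
    (W b cs : ℕ → ℝ)
    (hW : ∀ t, W t = ∏ l ∈ Finset.Ico (t + 1) (T + 1), (1 - τ * φ l))
    (hb : ∀ t, b t = ((3 / Υ + 2 * (n : ℝ) * φ t) / (2 * Γ t)) *
        (540 * (q : ℝ) ^ 2 * Lbar ^ 2 * (n : ℝ) * φ t ^ 2))
    (hcs : ∀ t, cs t = 12 * Γ t * φ t) :
    (∀ s t : ℕ, s ≤ T → t ≤ T → |(s : ℤ) - (t : ℤ)| ≤ 4 * q →
        (4 / 5) * (b t * W t) ≤ b s * W s) ∧
    (∀ s t : ℕ, s ≤ T → t ≤ T → |(s : ℤ) - (t : ℤ)| ≤ 2 * q →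
        (4 / 5) * (cs t * W t) ≤ cs s * W s) ∧
    (∀ s t : ℕ, (t : ℤ) - 3 * q ≤ (s : ℤ) → (s : ℤ) ≤ (t : ℤ) + 2 * q →
        φ s ^ 2 * Γ t ^ 2 ≤ (6 / 5) * (φ t ^ 2 * Γ s ^ 2)) := by
  have hn0 : (0 : ℝ) < n := by exact_mod_cast (show 0 < n by omega)
  have hφ : Antitone φ := antitone_nat_of_succ_le hmono
  have hφ_step : ∀ s t, t ≤ s → s ≤ t + 4 * q → 24 / 25 * φ t ≤ φ s := fun s t =>
    mul_le_of_ratio_of_le_add hq hn (fun l => (hpos l).le) hratio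
  have hf : ∀ l, 1 - 1 / (n : ℝ) ≤ 1 - τ * φ l := fun l => by nlinarith [hub l, hpos l]
  have hf0 : ∀ l, 0 ≤ 1 - τ * φ l := fun l => by
    linarith [hf l, Nat.one_sub_one_div_cast_nonneg (α := ℝ) n]
  have hf1 : ∀ l, 1 - τ * φ l ≤ 1 := fun l => by nlinarith [hpos l]
  obtain rfl : W = fun t => ∏ l ∈ Ico (t + 1) (T + 1), (1 - τ * φ l) := funext hW
  have hW0 : ∀ t, 0 ≤ ∏ l ∈ Ico (t + 1) (T + 1), (1 - τ * φ l) :=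
    fun t => prod_nonneg fun l _ => hf0 l
  have hWmono := monotone_prod_Ico_succ (T := T) hf0 hf1
  have hW_step := fun s t => mul_prod_Ico_succ_le_of_le_add (T := T) hq hn hf (s := s) (t := t)
  have hb0 : ∀ t, 0 ≤ b t := fun t => by have := hpos t; rw [hb, hΓ]; positivity
  have hcs0 : ∀ t, 0 ≤ cs t := fun t => by have := hpos t; rw [hcs, hΓ]; positivity
  have hb_scale : ∀ a s t, 0 ≤ a → a ≤ 1 → a * φ t ≤ φ s → a ^ 3 * b t ≤ b s :=
    fun a s t ha0 ha1 h => by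
      rw [hb, hb, hΓ, hΓ]
      exact pow_three_mul_div_sqrt_mul_le (by positivity) (by positivity) (by positivity) hc hn0
        ha0 ha1 (hpos t) (hpos s) h
  have hcs_scale : ∀ a s t, 0 ≤ a → a ≤ 1 → a * φ t ≤ φ s → a ^ 2 * cs t ≤ cs s :=
    fun a s t ha0 ha1 h => by
      rw [hcs, hcs, hΓ, hΓ]
      exact sq_mul_mul_sqrt_mul_le (by norm_num) hc.le hn0.le ha0 ha1 (hpos t).le h
  refine ⟨fun s t _ htT hst => ?_, fun s t _ htT hst => ?_, fun s t hts hst => ?_⟩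
  · exact mul_le_mul_of_abs_sub_le_of_scaling hφ hφ_step (by norm_num) (by norm_num)
      (by norm_num) hb0 hb_scale hW0 hWmono hW_step htT (by exact_mod_cast hst)
  · exact mul_le_mul_of_abs_sub_le_of_scaling (k := 2 * q) hφ
      (fun s t hts hs => hφ_step s t hts (by omega)) (by norm_num) (by norm_num) (by norm_num)
      hcs0 hcs_scale hW0 hWmono (fun s t hst ht => hW_step s t hst (by omega)) htT
      (by exact_mod_cast hst)
  · have hφst : φ s ≤ 6 / 5 * φ t := by
      rcases le_total t s with h | h
      · linarith [hφ h, hpos t]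
      · linarith [hφ_step t s h (by omega), hpos s]
    rw [hΓ, hΓ]
    exact sq_mul_sq_le_of_le_mul hn0.le (hpos s).le (hpos t).le hφst

/-- Lower bounds on Φ_b and Φ_c and upper bound on ξ when √(φ_t)/Γ_t is constant
and n ≥ 50q. -/
theorem stmt3 (n q T : ℕ) (hq : 1 ≤ q) (hn : 50 * q ≤ n)
    (τ Υ Lbar c : ℝ) (hτ0 : 0 < τ) (hτ1 : τ ≤ 1) (hΥ : 0 < Υ) (hL : 0 < Lbar) (hc : 0 < c)
    (φ : ℕ → ℝ) (hmono : ∀ l, φ (l + 1) ≤ φ l)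
    (hpos : ∀ l, 0 < φ l) (hub : ∀ l, φ l ≤ 1 / (n : ℝ))
    (hratio : ∀ l, φ (l + 1) ≥ (1 - 1 / (2 * (n : ℝ))) * φ l)
    (Γ : ℕ → ℝ) (hΓ : ∀ l, Γ l = c * Real.sqrt ((n : ℝ) * φ l))
    (W b cs : ℕ → ℝ)
    (hW : ∀ t, W t = ∏ l ∈ Finset.Ico (t + 1) (T + 1), (1 - τ * φ l))
    (hb : ∀ t, b t = ((3 / Υ + 2 * (n : ℝ) * φ t) / (2 * Γ t)) *
        (540 * (q : ℝ) ^ 2 * Lbar ^ 2 * (n : ℝ) * φ t ^ 2))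
    (hcs : ∀ t, cs t = 12 * Γ t * φ t) :
    (∀ s t : ℕ, s ≤ T → t ≤ T → |(s : ℤ) - (t : ℤ)| ≤ 4 * q →
        (4 / 5) * (b t * W t) ≤ b s * W s) ∧
    (∀ s t : ℕ, s ≤ T → t ≤ T → |(s : ℤ) - (t : ℤ)| ≤ 2 * q →
        (4 / 5) * (cs t * W t) ≤ cs s * W s) ∧
    (∀ s t : ℕ, (t : ℤ) - 3 * q ≤ (s : ℤ) → (s : ℤ) ≤ (t : ℤ) + 2 * q →
        φ s ^ 2 * Γ t ^ 2 ≤ (6 / 5) * (φ t ^ 2 * Γ s ^ 2)) :=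
  stmt3_general n q T hq hn τ Υ Lbar c hτ0 hτ1 hΥ hc φ hmono hpos hub hratio Γ hΓ W b cs hW hb hcs
end

section
/- Let n, q ∈ ℕ with n ≥ 10, 1 ≤ q, and q ≤ min{(n−8)/12, (2n−4)/10, n/20}. Let φ ∈ ℝ with 0 < φ ≤ 1/(n+1), and let A be the 2×2 real matrix with first row ((1+φ²)/(1+φ), 1 − (1+φ²)/(1+φ)) and second row (φ, 1−φ). Then A is invertible, and for all integers s, t ≥ 0 with |s − t| ≤ 2q, writing M := A^{t−s−1} (an integer power of the invertible matrix A) and c := (n+1)φ/(1+φ), the following hold: |M₁₁·c + M₁₂| ≤ (3/2)·n·φ, |M₁₁·c| ≤ (3/2)·n·φ, |M₁₂| ≤ (3/2)·n·φ, and |M₂₁·c + M₂₂| ≤ 2. -/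
/-!
The rows of `A` sum to `1` and `det A = μ := (1 - φ) / (1 + φ)`, so `A = Π + μ (1 - Π)` for the
rank-one projection `Π` onto the fixed vector `(1, 1)` along the `μ`-eigenvector. Hence
`A ^ k = Π + μ ^ k (1 - Π)` for every integer `k`, and all four quantities are affine in
`μ ^ k` and `μ ^ (k + 1)`. As `1 - μ ≤ 2 φ ≤ 2 / (n + 1)` and `|k| ≤ n / 10 + 1`, Bernoulli's
inequality keeps these powers within `(22 / 7) |k| φ ≤ 4 / 7` of `1`, and the bounds follow.
-/

namespace IsIdempotentElem

variable {K A : Type*} [CommRing K] [Ring A] [Algebra K A] {P : A}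

def complScalingHom (hP : IsIdempotentElem P) : K →* A where
  toFun μ := P + μ • (1 - P)
  map_one' := by simp
  map_mul' μ ν := by
    simp only [add_mul, mul_add, smul_mul_assoc, mul_smul_comm, hP.mul_one_sub_self,
      hP.one_sub_mul_self, hP.one_sub.eq, hP.eq, smul_zero, add_zero, zero_add, mul_smul]
    rw [smul_comm]

theorem complScalingHom_apply (hP : IsIdempotentElem P) (μ : K) :
    hP.complScalingHom μ = P + μ • (1 - P) :=
  rfl

theorem isUnit_add_smul_one_sub (hP : IsIdempotentElem P) {μ : K} (hμ : IsUnit μ) :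
    IsUnit (P + μ • (1 - P)) :=
  hμ.map hP.complScalingHom

theorem zpow_add_smul_one_sub {n F : Type*} [Fintype n] [DecidableEq n] [Field F]
    {P : Matrix n n F} (hP : IsIdempotentElem P) {μ : F} (hμ : μ ≠ 0) (k : ℤ) :
    (P + μ • (1 - P)) ^ k = P + μ ^ k • (1 - P) := by
  have h := Matrix.coe_units_zpow (Units.map hP.complScalingHom (Units.mk0 μ hμ)) k
  rw [← map_zpow] at h
  simp only [Units.coe_map, complScalingHom_apply, Units.val_zpow_eq_zpow_val,
    Units.val_mk0] at h
  exact h.symm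

end IsIdempotentElem

theorem abs_pow_sub_one_le {μ δ : ℝ} (hμ0 : 0 ≤ μ) (hμ1 : μ ≤ 1) (hδ : 1 - μ ≤ δ) (m : ℕ) :
    |μ ^ m - 1| ≤ m * δ := by
  have hbernoulli := one_add_mul_le_pow (show (-2 : ℝ) ≤ -(1 - μ) by linarith) m
  rw [show 1 + -(1 - μ) = μ by ring] at hbernoulli
  rw [abs_sub_comm, abs_of_nonneg (sub_nonneg.2 (pow_le_one₀ hμ0 hμ1))]
  nlinarith [(Nat.cast_nonneg m : (0 : ℝ) ≤ m)]

theorem abs_zpow_sub_one_le {μ δ θ : ℝ} (hμ0 : 0 < μ) (hμ1 : μ ≤ 1) (hδ : 1 - μ ≤ δ)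
    (hθ : θ < 1) {j : ℤ} (hj : |(j : ℝ)| * δ ≤ θ) :
    |μ ^ j - 1| ≤ |(j : ℝ)| * δ / (1 - θ) := by
  obtain ⟨m, rfl | rfl⟩ := Int.eq_nat_or_neg j
  all_goals
    simp only [Int.cast_neg, Int.cast_natCast, abs_neg, Nat.abs_cast] at hj ⊢
    have hmδ : 0 ≤ m * δ := mul_nonneg m.cast_nonneg (by linarith)
    have hpow := abs_pow_sub_one_le hμ0.le hμ1 hδ m
  · rw [zpow_natCast]
    exact hpow.trans (le_div_self hmδ (by linarith) (by linarith))
  · have hpow_pos : 0 < μ ^ m := pow_pos hμ0 m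
    have hinv : (μ ^ m)⁻¹ - 1 = (1 - μ ^ m) / μ ^ m := by field_simp
    rw [zpow_neg, zpow_natCast, hinv, abs_div, abs_of_pos hpow_pos, abs_sub_comm]
    exact div_le_div₀ hmδ hpow (by linarith) (by linarith [abs_le.1 hpow])

noncomputable def acdMatrix (φ : ℝ) : Matrix (Fin 2) (Fin 2) ℝ :=
  !![(1 + φ ^ 2) / (1 + φ), 1 - (1 + φ ^ 2) / (1 + φ); φ, 1 - φ]

/-- The projection onto the fixed vector `(1, 1)` of `acdMatrix φ` along its eigenvector
`(1 - φ, -(1 + φ))` for the eigenvalue `(1 - φ) / (1 + φ)`. -/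
noncomputable def acdProj (φ : ℝ) : Matrix (Fin 2) (Fin 2) ℝ :=
  !![(1 + φ) / 2, (1 - φ) / 2; (1 + φ) / 2, (1 - φ) / 2]

theorem isIdempotentElem_acdProj (φ : ℝ) : IsIdempotentElem (acdProj φ) := by
  rw [IsIdempotentElem, acdProj, Matrix.mul_fin_two]
  ext i j
  fin_cases i <;> fin_cases j <;> simp <;> ring

theorem acdMatrix_eq {φ : ℝ} (hφ : 1 + φ ≠ 0) :
    acdMatrix φ = acdProj φ + ((1 - φ) / (1 + φ)) • (1 - acdProj φ) := by
  rw [acdMatrix, acdProj, Matrix.one_fin_two]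
  ext i j
  fin_cases i <;> fin_cases j <;> simp <;> field_simp <;> ring

theorem isUnit_acdMatrix {φ : ℝ} (hφ₀ : 1 + φ ≠ 0) (hφ₁ : 1 - φ ≠ 0) :
    IsUnit (acdMatrix φ) := by
  rw [acdMatrix_eq hφ₀]
  exact (isIdempotentElem_acdProj φ).isUnit_add_smul_one_sub (div_ne_zero hφ₁ hφ₀).isUnit

theorem acdMatrix_zpow {φ : ℝ} (hφ₀ : 1 + φ ≠ 0) (hφ₁ : 1 - φ ≠ 0) (k : ℤ) :
    acdMatrix φ ^ k = acdProj φ + ((1 - φ) / (1 + φ)) ^ k • (1 - acdProj φ) := by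
  rw [acdMatrix_eq hφ₀]
  exact (isIdempotentElem_acdProj φ).zpow_add_smul_one_sub (div_ne_zero hφ₁ hφ₀) k

/-- The four quantities of the theorem in terms of `x = μ ^ k` and `y = μ ^ (k + 1)`,
where `μ = (1 - φ) / (1 + φ)`. -/
theorem acd_bounds_of_abs_sub_one_le {n φ x y : ℝ} (hn : 10 ≤ n) (hφ0 : 0 < φ)
    (hφn : φ * (n + 1) ≤ 1) (hx0 : 0 < x) (hy0 : 0 < y)
    (hxb : |x - 1| ≤ 22 / 7 * (n / 10 + 1) * φ) (hyb : |y - 1| ≤ 22 / 7 * (n / 10) * φ) :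
    |(n * φ * (1 + y) + 1 - y) / 2| ≤ 3 / 2 * n * φ ∧
    |(n + 1) * φ / 2 * (1 + y)| ≤ 3 / 2 * n * φ ∧
    |(1 - φ) / 2 * (1 - x)| ≤ 3 / 2 * n * φ ∧
    |(n * φ * (1 - x) + 1 + x) / 2| ≤ 2 := by
  have hnφ : 0 ≤ n * φ := by positivity
  have hnφ1 : n * φ ≤ 1 := by nlinarith
  have hkφ : (n / 10 + 1) * φ ≤ 2 / 11 := by nlinarith
  have h10φ : 10 * φ ≤ n * φ := mul_le_mul_of_nonneg_right hn hφ0.le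
  have hkφφ : 0 ≤ (n / 10 + 1) * φ * φ := by positivity
  obtain ⟨hx₁, hx₂⟩ := abs_le.1 hxb
  obtain ⟨hy₁, hy₂⟩ := abs_le.1 hyb
  have hx_le : x ≤ 11 / 7 := by linarith
  have hy_le : y ≤ 11 / 7 := by nlinarith
  refine ⟨abs_le.2 ⟨?_, ?_⟩, abs_le.2 ⟨?_, ?_⟩, abs_le.2 ⟨?_, ?_⟩, abs_le.2 ⟨?_, ?_⟩⟩
  · linarith [mul_nonneg hnφ hy0.le]
  · linarith [mul_le_mul_of_nonneg_left hy₂ hnφ, mul_le_mul_of_nonneg_left hnφ1 hnφ]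
  · linarith [mul_nonneg hnφ hy0.le, mul_pos hφ0 hy0]
  · linarith [mul_le_mul_of_nonneg_left hy_le (by positivity : 0 ≤ (n + 1) * φ)]
  · linarith [mul_le_mul_of_nonneg_left hx₂ (by linarith : 0 ≤ 1 - φ)]
  · linarith [mul_le_mul_of_nonneg_left hx₁ (by linarith : 0 ≤ 1 - φ)]
  · linarith [mul_nonneg hx0.le (by linarith : 0 ≤ 1 - n * φ)]
  · linarith [mul_le_mul_of_nonneg_right hx_le (by linarith : 0 ≤ 1 - n * φ)]

theorem abs_zpow_acdEigenvalue_sub_one_le {n φ : ℝ} (hn : 10 ≤ n) (hφ0 : 0 < φ)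
    (hφn : φ * (n + 1) ≤ 1) {j : ℤ} (hj : |(j : ℝ)| ≤ n / 10 + 1) :
    |((1 - φ) / (1 + φ)) ^ j - 1| ≤ 22 / 7 * |(j : ℝ)| * φ := by
  have h1φ : 0 < 1 + φ := by linarith
  have hφ1 : φ < 1 := by nlinarith
  have hδ : 1 - (1 - φ) / (1 + φ) ≤ 2 * φ := by
    rw [sub_le_comm, le_div_iff₀ h1φ]; nlinarith
  refine (abs_zpow_sub_one_le (div_pos (by linarith) h1φ) ((div_le_one h1φ).2 (by linarith)) hδ
    (θ := 4 / 11) (by norm_num) ?_).trans_eq (by ring)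
  nlinarith [mul_le_mul_of_nonneg_right hj hφ0.le]

theorem acdMatrix_zpow_bounds {n φ : ℝ} (hn : 10 ≤ n) (hφ0 : 0 < φ) (hφn : φ * (n + 1) ≤ 1)
    {k : ℤ} (hk : |(k : ℝ) + 1| ≤ n / 10) :
    |(acdMatrix φ ^ k) 0 0 * ((n + 1) * φ / (1 + φ)) + (acdMatrix φ ^ k) 0 1|
        ≤ 3 / 2 * n * φ ∧
    |(acdMatrix φ ^ k) 0 0 * ((n + 1) * φ / (1 + φ))| ≤ 3 / 2 * n * φ ∧
    |(acdMatrix φ ^ k) 0 1| ≤ 3 / 2 * n * φ ∧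
    |(acdMatrix φ ^ k) 1 0 * ((n + 1) * φ / (1 + φ)) + (acdMatrix φ ^ k) 1 1| ≤ 2 := by
  have hk' : |(k : ℝ)| ≤ n / 10 + 1 := by
    rw [abs_le] at hk ⊢; constructor <;> linarith
  have hx := abs_zpow_acdEigenvalue_sub_one_le hn hφ0 hφn hk'
  have hy := abs_zpow_acdEigenvalue_sub_one_le hn hφ0 hφn (j := k + 1) (by push_cast; linarith)
  push_cast at hy
  have h1φ : 0 < 1 + φ := by linarith
  have hφ1 : φ < 1 := by nlinarith
  set μ := (1 - φ) / (1 + φ) with hμ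
  have hμ0 : 0 < μ := div_pos (by linarith) h1φ
  have hM := acdMatrix_zpow h1φ.ne' (by linarith : 1 - φ ≠ 0) k
  rw [← hμ] at hM
  set x := μ ^ k
  have hxy : μ ^ (k + 1) = x * μ := zpow_add_one₀ hμ0.ne' k
  set y := μ ^ (k + 1)
  have h0 : (acdMatrix φ ^ k) 0 0 * ((n + 1) * φ / (1 + φ)) + (acdMatrix φ ^ k) 0 1
      = (n * φ * (1 + y) + 1 - y) / 2 := by
    rw [hM, hxy, hμ]; simp [acdProj]; field_simp; ring
  have h00 : (acdMatrix φ ^ k) 0 0 * ((n + 1) * φ / (1 + φ)) = (n + 1) * φ / 2 * (1 + y) := by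
    rw [hM, hxy, hμ]; simp [acdProj]; field_simp; ring
  have h01 : (acdMatrix φ ^ k) 0 1 = (1 - φ) / 2 * (1 - x) := by
    rw [hM]; simp [acdProj]; ring
  have h1 : (acdMatrix φ ^ k) 1 0 * ((n + 1) * φ / (1 + φ)) + (acdMatrix φ ^ k) 1 1
      = (n * φ * (1 - x) + 1 + x) / 2 := by
    rw [hM]; simp [acdProj]; field_simp; ring
  rw [h0, h00, h01, h1]
  exact acd_bounds_of_abs_sub_one_le hn hφ0 hφn (zpow_pos hμ0 k) (zpow_pos hμ0 (k + 1))
    (hx.trans (by gcongr)) (hy.trans (by gcongr))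

theorem stmt4_general (n q : ℕ) (hn : 10 ≤ n)
    (hq3 : (q : ℝ) ≤ (n : ℝ) / 20)
    (φ : ℝ) (hφ0 : 0 < φ) (hφ1 : φ ≤ 1 / ((n : ℝ) + 1))
    (A : Matrix (Fin 2) (Fin 2) ℝ)
    (hA : A = !![(1 + φ ^ 2) / (1 + φ), 1 - (1 + φ ^ 2) / (1 + φ); φ, 1 - φ]) :
    IsUnit A ∧
    ∀ s t : ℕ, |(s : ℤ) - (t : ℤ)| ≤ 2 * q →
      |(A ^ ((t : ℤ) - (s : ℤ) - 1)) 0 0 * (((n : ℝ) + 1) * φ / (1 + φ))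
          + (A ^ ((t : ℤ) - (s : ℤ) - 1)) 0 1| ≤ (3 / 2) * (n : ℝ) * φ ∧
      |(A ^ ((t : ℤ) - (s : ℤ) - 1)) 0 0 * (((n : ℝ) + 1) * φ / (1 + φ))|
          ≤ (3 / 2) * (n : ℝ) * φ ∧
      |(A ^ ((t : ℤ) - (s : ℤ) - 1)) 0 1| ≤ (3 / 2) * (n : ℝ) * φ ∧
      |(A ^ ((t : ℤ) - (s : ℤ) - 1)) 1 0 * (((n : ℝ) + 1) * φ / (1 + φ))
          + (A ^ ((t : ℤ) - (s : ℤ) - 1)) 1 1| ≤ 2 := by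
  have hn' : (10 : ℝ) ≤ n := by exact_mod_cast hn
  have hφn : φ * (n + 1) ≤ 1 := by rwa [le_div_iff₀ (by positivity)] at hφ1
  rw [show A = acdMatrix φ from hA]
  refine ⟨isUnit_acdMatrix (by positivity) (sub_ne_zero.2 (by nlinarith : φ < 1).ne'), fun s t hst => ?_⟩
  have hts : |(t : ℝ) - s| ≤ 2 * q := by rw [abs_sub_comm]; exact_mod_cast hst
  exact acdMatrix_zpow_bounds hn' hφ0 hφn (by push_cast; rw [sub_add_cancel]; linarith)

/-- The matrices B^t = A^t arising in the strongly convex case are "good". -/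
theorem stmt4 (n q : ℕ) (hn : 10 ≤ n) (hq : 1 ≤ q)
    (hq1 : (q : ℝ) ≤ ((n : ℝ) - 8) / 12)
    (hq2 : (q : ℝ) ≤ (2 * (n : ℝ) - 4) / 10)
    (hq3 : (q : ℝ) ≤ (n : ℝ) / 20)
    (φ : ℝ) (hφ0 : 0 < φ) (hφ1 : φ ≤ 1 / ((n : ℝ) + 1))
    (A : Matrix (Fin 2) (Fin 2) ℝ)
    (hA : A = !![(1 + φ ^ 2) / (1 + φ), 1 - (1 + φ ^ 2) / (1 + φ); φ, 1 - φ]) :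
    IsUnit A ∧
    ∀ s t : ℕ, |(s : ℤ) - (t : ℤ)| ≤ 2 * q →
      |(A ^ ((t : ℤ) - (s : ℤ) - 1)) 0 0 * (((n : ℝ) + 1) * φ / (1 + φ))
          + (A ^ ((t : ℤ) - (s : ℤ) - 1)) 0 1| ≤ (3 / 2) * (n : ℝ) * φ ∧
      |(A ^ ((t : ℤ) - (s : ℤ) - 1)) 0 0 * (((n : ℝ) + 1) * φ / (1 + φ))|
          ≤ (3 / 2) * (n : ℝ) * φ ∧
      |(A ^ ((t : ℤ) - (s : ℤ) - 1)) 0 1| ≤ (3 / 2) * (n : ℝ) * φ ∧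
      |(A ^ ((t : ℤ) - (s : ℤ) - 1)) 1 0 * (((n : ℝ) + 1) * φ / (1 + φ))
          + (A ^ ((t : ℤ) - (s : ℤ) - 1)) 1 1| ≤ 2 :=
  stmt4_general n q hn hq3 φ hφ0 hφ1 A hA
end

section
/- Let n, q ∈ ℕ with n ≥ 10 and 1 ≤ q ≤ min{(n−8)/12, (2n−4)/10, n/20}, and let t₀ ∈ ℝ with t₀ ≥ 2(n+1). For t ∈ ℕ set φ_t := 2/(t₀+t), let A_t be the 2×2 real matrix with first row ((t+t₀−1)/(t+t₀+1), 2/(t+t₀+1)) and second row (0, 1), and define B_0 = I and B_{t+1} = A_t·B_t. Then each A_t (hence each B_t) is invertible, and for all integers s, t ≥ 0 with |s − t| ≤ 2q, writing M := B_t·B_{s+1}⁻¹ and c_s := 2n(t₀+s−1)/((t₀+s)(t₀+s+1)) + 2/(t₀+s+1), the following hold: |M₁₁·c_s + M₁₂| ≤ (3/2)·n·φ_t, |M₁₁·c_s| ≤ (3/2)·n·φ_t, |M₁₂| ≤ (3/2)·n·φ_t, and |M₂₁·c_s + M₂₂| ≤ 2. -/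
/-!
The matrices `!![x, 1 - x; 0, 1]` form a multiplicative copy of the scalars: their product
corresponds to the product of the `x`'s. Each `A t` is of this form with
`x = (T - 1) / (T + 1)`, `T = t₀ + t`, so `B t` corresponds to the telescoping product
`(t₀ - 1) t₀ / ((T - 1) T)` and `B t * (B (s + 1))⁻¹` to `ρ = S (S + 1) / ((T - 1) T)` with
`S = t₀ + s`. All four entries to be bounded are then explicit rational functions of `S`, `T`, `n`,
and the bounds become polynomial inequalities in the window `|S - T| ≤ 2q ≤ n / 10`,
`S, T ≥ 2n + 2`.
-/

open Finset

def upperStochastic {R : Type*} [CommRing R] (x : R) : Matrix (Fin 2) (Fin 2) R :=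
  !![x, 1 - x; 0, 1]

namespace upperStochastic

variable {R : Type*} [CommRing R]

@[simp] theorem apply_zero_zero (x : R) : upperStochastic x 0 0 = x := rfl

@[simp] theorem apply_zero_one (x : R) : upperStochastic x 0 1 = 1 - x := rfl

@[simp] theorem apply_one_zero (x : R) : upperStochastic x 1 0 = 0 := rfl

@[simp] theorem apply_one_one (x : R) : upperStochastic x 1 1 = 1 := rfl

@[simp] theorem one : upperStochastic (1 : R) = 1 := by
  rw [upperStochastic, Matrix.one_fin_two, sub_self]

theorem mul (x y : R) : upperStochastic x * upperStochastic y = upperStochastic (x * y) := by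
  rw [upperStochastic, upperStochastic, upperStochastic, Matrix.mul_fin_two,
    show x * (1 - y) + (1 - x) * 1 = 1 - x * y by ring]
  simp

@[simp] theorem det (x : R) : (upperStochastic x).det = x := by
  simp [upperStochastic, Matrix.det_fin_two_of]

theorem isUnit_iff {x : R} : IsUnit (upperStochastic x) ↔ IsUnit x := by
  rw [Matrix.isUnit_iff_isUnit_det, det]

theorem inv {K : Type*} [Field K] {x : K} (hx : x ≠ 0) :
    (upperStochastic x)⁻¹ = upperStochastic x⁻¹ :=
  Matrix.inv_eq_right_inv (by rw [mul, mul_inv_cancel₀ hx, one])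

theorem mul_inv {K : Type*} [Field K] {x y : K} (hy : y ≠ 0) :
    upperStochastic x * (upperStochastic y)⁻¹ = upperStochastic (x / y) := by
  rw [inv hy, mul, div_eq_mul_inv]

theorem eq_prod_of_succ {a : ℕ → R} {B : ℕ → Matrix (Fin 2) (Fin 2) R} (h0 : B 0 = 1)
    (hsucc : ∀ t, B (t + 1) = upperStochastic (a t) * B t) (t : ℕ) :
    B t = upperStochastic (∏ i ∈ range t, a i) := by
  induction t with
  | zero => rw [h0, prod_range_zero, one]
  | succ t ih => rw [hsucc, ih, mul, prod_range_succ, mul_comm]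

end upperStochastic

theorem prod_range_sub_one_div_add_one {c : ℝ} (hc : 1 < c) (t : ℕ) :
    ∏ i ∈ range t, ((i : ℝ) + c - 1) / (i + c + 1) = (c - 1) * c / ((t + c - 1) * (t + c)) := by
  induction t with
  | zero =>
    rw [prod_range_zero, Nat.cast_zero, zero_add, div_self (by nlinarith)]
  | succ t ih =>
    have : (0 : ℝ) ≤ t := t.cast_nonneg
    rw [prod_range_succ, ih]
    push_cast
    rw [show (t : ℝ) + 1 + c - 1 = t + c by ring, show (t : ℝ) + 1 + c = t + c + 1 by ring]
    have h1 : (t : ℝ) + c - 1 ≠ 0 := by linarith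
    have h2 : (t : ℝ) + c ≠ 0 := by linarith
    have h3 : (t : ℝ) + c + 1 ≠ 0 := by linarith
    field_simp

theorem upperStochastic_of_rec {t₀ : ℝ} (ht₀ : 1 < t₀) {A B : ℕ → Matrix (Fin 2) (Fin 2) ℝ}
    (hA : ∀ t : ℕ, A t = !![((t : ℝ) + t₀ - 1) / ((t : ℝ) + t₀ + 1), 2 / ((t : ℝ) + t₀ + 1); 0, 1])
    (hB0 : B 0 = 1) (hBs : ∀ t : ℕ, B (t + 1) = A t * B t) :
    (∀ t, IsUnit (A t)) ∧ (∀ t, IsUnit (B t)) ∧ ∀ s t : ℕ,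
      B t * (B (s + 1))⁻¹ =
        upperStochastic ((t₀ + s) * (t₀ + s + 1) / ((t₀ + t - 1) * (t₀ + t))) := by
  have hpos : ∀ t : ℕ, 0 < (t : ℝ) + t₀ - 1 := fun t => by linarith [t.cast_nonneg (α := ℝ)]
  have hA' : ∀ t : ℕ, A t = upperStochastic (((t : ℝ) + t₀ - 1) / (t + t₀ + 1)) := fun t => by
    rw [hA, upperStochastic, one_sub_div (by linarith [hpos t])]
    ring_nf
  have hB' : ∀ t : ℕ, B t = upperStochastic ((t₀ - 1) * t₀ / ((t + t₀ - 1) * (t + t₀))) :=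
    fun t => by
      rw [upperStochastic.eq_prod_of_succ hB0 (fun t => by rw [hBs, hA']) t,
        prod_range_sub_one_div_add_one ht₀ t]
  have hB_ne : ∀ t : ℕ, (t₀ - 1) * t₀ / ((t + t₀ - 1) * (t + t₀)) ≠ 0 := fun t =>
    (div_pos (by nlinarith) (mul_pos (hpos t) (by linarith [hpos t]))).ne'
  refine ⟨fun t => ?_, fun t => ?_, fun s t => ?_⟩
  · rw [hA', upperStochastic.isUnit_iff]
    exact (div_pos (hpos t) (by linarith [hpos t])).ne'.isUnit
  · rw [hB', upperStochastic.isUnit_iff]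
    exact (hB_ne t).isUnit
  · rw [hB', hB', upperStochastic.mul_inv (hB_ne _),
      div_div_div_cancel_left' _ _ (mul_ne_zero (by linarith) (by linarith))]
    congr 1
    push_cast
    ring

theorem abs_div_sub_one_mul_le {N K T : ℝ} (hT : 1 < T) (hN : |N| ≤ K * (T - 1)) :
    |N / ((T - 1) * T)| ≤ K / T := by
  have hT1 : 0 < T - 1 := by linarith
  have hT0 : 0 < T := by linarith
  rw [abs_div, abs_of_pos (mul_pos hT1 hT0), div_le_div_iff₀ (mul_pos hT1 hT0) hT0]
  nlinarith

theorem ratio_bounds {n S T ρ c : ℝ} (hn : 3 ≤ n) (hT : 2 * n + 2 ≤ T) (hS : 2 * n + 2 ≤ S)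
    (hST : |S - T| ≤ n / 10) (hρ : ρ = S * (S + 1) / ((T - 1) * T))
    (hc : c = 2 * n * (S - 1) / (S * (S + 1)) + 2 / (S + 1)) :
    |ρ * c + (1 - ρ)| ≤ 3 / 2 * n * (2 / T) ∧ |ρ * c| ≤ 3 / 2 * n * (2 / T) ∧
      |1 - ρ| ≤ 3 / 2 * n * (2 / T) := by
  obtain ⟨hST₁, hST₂⟩ := abs_le.1 hST
  have hS_ne : S ≠ 0 := by linarith
  have hS1_ne : S + 1 ≠ 0 := by linarith
  have hT_ne : T ≠ 0 := by linarith
  have hT1_ne : T - 1 ≠ 0 := by linarith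
  have hK : 3 / 2 * n * (2 / T) = 3 * n / T := by ring
  have hρc : ρ * c = (2 * n * (S - 1) + 2 * S) / ((T - 1) * T) := by
    rw [hρ, hc]; field_simp
  have hρ' : 1 - ρ = (T * (T - 1) - S * (S + 1)) / ((T - 1) * T) := by
    rw [hρ]; field_simp
  have hρcρ : ρ * c + (1 - ρ) =
      (2 * n * (S - 1) + T * (T - 1) - S * (S - 1)) / ((T - 1) * T) := by
    rw [hρc, hρ', ← add_div]; ring_nf
  -- The differences `T (T - 1) - S (S ∓ 1)` factor through `T - S`, which is at most `n / 10`.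
  have hN₁ : |2 * n * (S - 1) + T * (T - 1) - S * (S - 1)| ≤ 3 * n * (T - 1) :=
    abs_le.2 ⟨by nlinarith, by nlinarith⟩
  have hN₂ : |2 * n * (S - 1) + 2 * S| ≤ 3 * n * (T - 1) := abs_le.2 ⟨by nlinarith, by nlinarith⟩
  have hN₃ : |T * (T - 1) - S * (S + 1)| ≤ 3 * n * (T - 1) := abs_le.2 ⟨by nlinarith, by nlinarith⟩
  have hT1 : 1 < T := by linarith
  rw [hK, hρcρ, hρc, hρ']
  exact ⟨abs_div_sub_one_mul_le hT1 hN₁, abs_div_sub_one_mul_le hT1 hN₂,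
    abs_div_sub_one_mul_le hT1 hN₃⟩

theorem stmt5_general (n q : ℕ) (hn : 10 ≤ n)
    (hq3 : (q : ℝ) ≤ (n : ℝ) / 20)
    (t₀ : ℝ) (ht₀ : 2 * ((n : ℝ) + 1) ≤ t₀)
    (A B : ℕ → Matrix (Fin 2) (Fin 2) ℝ)
    (hA : ∀ t : ℕ, A t = !![((t : ℝ) + t₀ - 1) / ((t : ℝ) + t₀ + 1),
        2 / ((t : ℝ) + t₀ + 1); 0, 1])
    (hB0 : B 0 = 1) (hBs : ∀ t : ℕ, B (t + 1) = A t * B t) :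
    (∀ t : ℕ, IsUnit (A t)) ∧ (∀ t : ℕ, IsUnit (B t)) ∧
    ∀ s t : ℕ, |(s : ℤ) - (t : ℤ)| ≤ 2 * q →
      |(B t * (B (s + 1))⁻¹) 0 0 *
            (2 * (n : ℝ) * (t₀ + (s : ℝ) - 1) / ((t₀ + (s : ℝ)) * (t₀ + (s : ℝ) + 1))
              + 2 / (t₀ + (s : ℝ) + 1))
          + (B t * (B (s + 1))⁻¹) 0 1| ≤ (3 / 2) * (n : ℝ) * (2 / (t₀ + (t : ℝ))) ∧
      |(B t * (B (s + 1))⁻¹) 0 0 *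
            (2 * (n : ℝ) * (t₀ + (s : ℝ) - 1) / ((t₀ + (s : ℝ)) * (t₀ + (s : ℝ) + 1))
              + 2 / (t₀ + (s : ℝ) + 1))| ≤ (3 / 2) * (n : ℝ) * (2 / (t₀ + (t : ℝ))) ∧
      |(B t * (B (s + 1))⁻¹) 0 1| ≤ (3 / 2) * (n : ℝ) * (2 / (t₀ + (t : ℝ))) ∧
      |(B t * (B (s + 1))⁻¹) 1 0 *
            (2 * (n : ℝ) * (t₀ + (s : ℝ) - 1) / ((t₀ + (s : ℝ)) * (t₀ + (s : ℝ) + 1))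
              + 2 / (t₀ + (s : ℝ) + 1))
          + (B t * (B (s + 1))⁻¹) 1 1| ≤ 2 := by
  have hn' : (10 : ℝ) ≤ n := by exact_mod_cast hn
  have hT : ∀ t : ℕ, 2 * (n : ℝ) + 2 ≤ t₀ + t := fun t => by linarith [t.cast_nonneg (α := ℝ)]
  obtain ⟨hA_unit, hB_unit, hM⟩ := upperStochastic_of_rec (by linarith) hA hB0 hBs
  refine ⟨hA_unit, hB_unit, fun s t hst => ?_⟩
  have hST : |(t₀ + s) - (t₀ + t)| ≤ n / 10 := by
    have : |(s : ℝ) - t| ≤ 2 * q := by exact_mod_cast hst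
    rw [add_sub_add_left_eq_sub]
    linarith
  obtain ⟨h₁, h₂, h₃⟩ := ratio_bounds (by linarith) (hT t) (hT s) hST rfl rfl
  rw [hM, upperStochastic.apply_zero_zero, upperStochastic.apply_zero_one,
    upperStochastic.apply_one_zero, upperStochastic.apply_one_one]
  exact ⟨h₁, h₂, h₃, by norm_num⟩

/-- The matrices B^t arising in the non-strongly convex case are "good". -/
theorem stmt5 (n q : ℕ) (hn : 10 ≤ n) (hq : 1 ≤ q)
    (hq1 : (q : ℝ) ≤ ((n : ℝ) - 8) / 12)
    (hq2 : (q : ℝ) ≤ (2 * (n : ℝ) - 4) / 10)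
    (hq3 : (q : ℝ) ≤ (n : ℝ) / 20)
    (t₀ : ℝ) (ht₀ : 2 * ((n : ℝ) + 1) ≤ t₀)
    (A B : ℕ → Matrix (Fin 2) (Fin 2) ℝ)
    (hA : ∀ t : ℕ, A t = !![((t : ℝ) + t₀ - 1) / ((t : ℝ) + t₀ + 1),
        2 / ((t : ℝ) + t₀ + 1); 0, 1])
    (hB0 : B 0 = 1) (hBs : ∀ t : ℕ, B (t + 1) = A t * B t) :
    (∀ t : ℕ, IsUnit (A t)) ∧ (∀ t : ℕ, IsUnit (B t)) ∧
    ∀ s t : ℕ, |(s : ℤ) - (t : ℤ)| ≤ 2 * q →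
      |(B t * (B (s + 1))⁻¹) 0 0 *
            (2 * (n : ℝ) * (t₀ + (s : ℝ) - 1) / ((t₀ + (s : ℝ)) * (t₀ + (s : ℝ) + 1))
              + 2 / (t₀ + (s : ℝ) + 1))
          + (B t * (B (s + 1))⁻¹) 0 1| ≤ (3 / 2) * (n : ℝ) * (2 / (t₀ + (t : ℝ))) ∧
      |(B t * (B (s + 1))⁻¹) 0 0 *
            (2 * (n : ℝ) * (t₀ + (s : ℝ) - 1) / ((t₀ + (s : ℝ)) * (t₀ + (s : ℝ) + 1))
              + 2 / (t₀ + (s : ℝ) + 1))| ≤ (3 / 2) * (n : ℝ) * (2 / (t₀ + (t : ℝ))) ∧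
      |(B t * (B (s + 1))⁻¹) 0 1| ≤ (3 / 2) * (n : ℝ) * (2 / (t₀ + (t : ℝ))) ∧
      |(B t * (B (s + 1))⁻¹) 1 0 *
            (2 * (n : ℝ) * (t₀ + (s : ℝ) - 1) / ((t₀ + (s : ℝ)) * (t₀ + (s : ℝ) + 1))
              + 2 / (t₀ + (s : ℝ) + 1))
          + (B t * (B (s + 1))⁻¹) 1 1| ≤ 2 :=
  stmt5_general n q hn hq3 t₀ ht₀ A B hA hB0 hBs
end

section
/- Let m ≥ 1 and for i = 1,…,m let A_i be the 2×2 real matrix with first row (1−e_i, e_i) and second row (f_i, 1−f_i), where 0 ≤ e_i and 0 ≤ f_i. Let p, q ∈ ℝ and let (p', q')ᵀ = A_m···A_1·(p, q)ᵀ. Then: (i) p' − q' = (Π_{i=1}^m (1 − e_i − f_i))·(p − q); (ii) if moreover e_i + f_i ≤ 1 for all i, then min(p,q) ≤ p' ≤ max(p,q) and min(p,q) ≤ q' ≤ max(p,q), and (p'−q')·(p−q) ≥ 0; (iii) in particular, if e_i, f_i ≤ φ_i ≤ 1/2 for all i, then (Π_{i=1}^m (1−2φ_i))·|p−q| ≤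 |p'−q'| ≤ |p−q|. -/
/-!
Each update matrix `[[1 - e, e], [f, 1 - f]]` multiplies the difference of the two components
by `1 - e - f`, and when `e, f ≥ 0`, `e + f ≤ 1` both new components are convex combinations of
the old ones. Iterating, the difference picks up the product `∏ (1 - e_i - f_i) ∈ [0, 1]`, and
the components never leave the interval spanned by `p` and `q`.
-/

open Set Finset Matrix

namespace UpdateMatrix

lemma mulVec_sub (e f : ℝ) (x : Fin 2 → ℝ) :
    (!![1 - e, e; f, 1 - f] *ᵥ x) 0 - (!![1 - e, e; f, 1 - f] *ᵥ x) 1 =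
      (1 - e - f) * (x 0 - x 1) := by
  simp only [mulVec, dotProduct, Fin.sum_univ_two, of_apply, cons_val', cons_val_zero,
    cons_val_one, empty_val', cons_val_fin_one]
  ring

lemma mulVec_mem_uIcc {e f a b : ℝ} (he : 0 ≤ e) (hf : 0 ≤ f) (hef : e + f ≤ 1)
    {x : Fin 2 → ℝ} (hx : ∀ j, x j ∈ uIcc a b) (j : Fin 2) :
    (!![1 - e, e; f, 1 - f] *ᵥ x) j ∈ uIcc a b := by
  have hconv := convex_uIcc (𝕜 := ℝ) a b
  fin_cases j
  · simpa [mulVec, dotProduct, Fin.sum_univ_two] using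
      hconv (hx 0) (hx 1) (by linarith) he (by ring)
  · simpa [mulVec, dotProduct, Fin.sum_univ_two, add_comm] using
      hconv (hx 1) (hx 0) (by linarith) hf (by ring)

lemma prod_one_sub_bounds {ι : Type*} {s : Finset ι} {e f φ : ι → ℝ}
    (he : ∀ i ∈ s, 0 ≤ e i) (hf : ∀ i ∈ s, 0 ≤ f i)
    (hφ : ∀ i ∈ s, e i ≤ φ i ∧ f i ≤ φ i ∧ φ i ≤ 1 / 2) :
    0 ≤ ∏ i ∈ s, (1 - 2 * φ i) ∧ ∏ i ∈ s, (1 - 2 * φ i) ≤ ∏ i ∈ s, (1 - e i - f i) ∧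
      ∏ i ∈ s, (1 - e i - f i) ≤ 1 := by
  have hlow : ∀ i ∈ s, 0 ≤ 1 - 2 * φ i := fun i hi => by linarith [hφ i hi]
  have hmid : ∀ i ∈ s, 1 - 2 * φ i ≤ 1 - e i - f i := fun i hi => by linarith [hφ i hi]
  exact ⟨prod_nonneg hlow, prod_le_prod hlow hmid,
    prod_le_one (fun i hi => (hlow i hi).trans (hmid i hi))
      (fun i hi => by linarith [he i hi, hf i hi])⟩

variable {m : ℕ} {e f : ℕ → ℝ} {v : ℕ → Fin 2 → ℝ}

lemma trajectory_sub (hv : ∀ i < m, v (i + 1) = !![1 - e i, e i; f i, 1 - f i] *ᵥ v i) :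
    ∀ n ≤ m, v n 0 - v n 1 = (∏ i ∈ range n, (1 - e i - f i)) * (v 0 0 - v 0 1) := by
  intro n hn
  induction n with
  | zero => simp
  | succ k ih =>
    rw [hv k hn, mulVec_sub, ih (by omega), prod_range_succ]
    ring

lemma trajectory_mem_uIcc (he : ∀ i < m, 0 ≤ e i) (hf : ∀ i < m, 0 ≤ f i)
    (hef : ∀ i < m, e i + f i ≤ 1)
    (hv : ∀ i < m, v (i + 1) = !![1 - e i, e i; f i, 1 - f i] *ᵥ v i) :
    ∀ n ≤ m, ∀ j, v n j ∈ uIcc (v 0 0) (v 0 1) := by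
  intro n hn
  induction n with
  | zero =>
    intro j
    fin_cases j
    exacts [left_mem_uIcc, right_mem_uIcc]
  | succ k ih =>
    rw [hv k hn]
    exact mulVec_mem_uIcc (he k hn) (hf k hn) (hef k hn) (ih (by omega))

end UpdateMatrix

open UpdateMatrix

theorem stmt6_general (m : ℕ)
    (e f : ℕ → ℝ) (he : ∀ i < m, 0 ≤ e i) (hf : ∀ i < m, 0 ≤ f i)
    (A : ℕ → Matrix (Fin 2) (Fin 2) ℝ)
    (hA : ∀ i < m, A i = !![1 - e i, e i; f i, 1 - f i])
    (p q : ℝ) (v : ℕ → Fin 2 → ℝ)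
    (hv0 : v 0 = ![p, q]) (hvs : ∀ i < m, v (i + 1) = (A i).mulVec (v i)) :
    (v m 0 - v m 1 = (∏ i ∈ Finset.range m, (1 - e i - f i)) * (p - q)) ∧
    ((∀ i < m, e i + f i ≤ 1) →
      min p q ≤ v m 0 ∧ v m 0 ≤ max p q ∧ min p q ≤ v m 1 ∧ v m 1 ≤ max p q ∧
      (v m 0 - v m 1) * (p - q) ≥ 0) ∧
    (∀ φ : ℕ → ℝ, (∀ i < m, e i ≤ φ i ∧ f i ≤ φ i ∧ φ i ≤ 1 / 2) →
      (∏ i ∈ Finset.range m, (1 - 2 * φ i)) * |p - q| ≤ |v m 0 - v m 1| ∧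
      |v m 0 - v m 1| ≤ |p - q|) := by
  have hv : ∀ i < m, v (i + 1) = !![1 - e i, e i; f i, 1 - f i] *ᵥ v i := fun i hi =>
    hA i hi ▸ hvs i hi
  have hdiff : v m 0 - v m 1 = (∏ i ∈ range m, (1 - e i - f i)) * (p - q) := by
    simpa [hv0] using trajectory_sub hv m le_rfl
  refine ⟨hdiff, fun hef => ?_, fun φ hφ => ?_⟩
  · have hbd := trajectory_mem_uIcc he hf hef hv m le_rfl
    simp only [hv0, cons_val_zero, cons_val_one] at hbd
    have hprod : 0 ≤ ∏ i ∈ range m, (1 - e i - f i) :=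
      prod_nonneg fun i hi => by linarith [hef i (mem_range.mp hi)]
    refine ⟨(hbd 0).1, (hbd 0).2, (hbd 1).1, (hbd 1).2, ?_⟩
    rw [hdiff, mul_assoc, ← sq]
    positivity
  · obtain ⟨hnonneg, hlower, hupper⟩ := prod_one_sub_bounds (s := range m)
      (fun i hi => he i (mem_range.mp hi)) (fun i hi => hf i (mem_range.mp hi))
      (fun i hi => hφ i (mem_range.mp hi))
    rw [hdiff, abs_mul, abs_of_nonneg (hnonneg.trans hlower)]
    exact ⟨mul_le_mul_of_nonneg_right hlower (abs_nonneg _),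
      mul_le_of_le_one_left (abs_nonneg _) hupper⟩

/-- Products of update matrices [[1-e, e],[f, 1-f]] preserve the order of the two
components, keep them within the interval they span, and contract their difference
by exactly the factor Π(1 - e_i - f_i). -/
theorem stmt6 (m : ℕ) (hm : 1 ≤ m)
    (e f : ℕ → ℝ) (he : ∀ i < m, 0 ≤ e i) (hf : ∀ i < m, 0 ≤ f i)
    (A : ℕ → Matrix (Fin 2) (Fin 2) ℝ)
    (hA : ∀ i < m, A i = !![1 - e i, e i; f i, 1 - f i])
    (p q : ℝ) (v : ℕ → Fin 2 → ℝ)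
    (hv0 : v 0 = ![p, q]) (hvs : ∀ i < m, v (i + 1) = (A i).mulVec (v i)) :
    (v m 0 - v m 1 = (∏ i ∈ Finset.range m, (1 - e i - f i)) * (p - q)) ∧
    ((∀ i < m, e i + f i ≤ 1) →
      min p q ≤ v m 0 ∧ v m 0 ≤ max p q ∧ min p q ≤ v m 1 ∧ v m 1 ≤ max p q ∧
      (v m 0 - v m 1) * (p - q) ≥ 0) ∧
    (∀ φ : ℕ → ℝ, (∀ i < m, e i ≤ φ i ∧ f i ≤ φ i ∧ φ i ≤ 1 / 2) →
      (∏ i ∈ Finset.range m, (1 - 2 * φ i)) * |p - q| ≤ |v m 0 - v m 1| ∧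
      |v m 0 - v m 1| ≤ |p - q|) :=
  stmt6_general m e f he hf A hA p q v hv0 hvs
end

section
/- Let n ∈ ℕ with n ≥ 2, let τ > 0, let T ∈ ℕ, and let φ_0, …, φ_{T−1} be reals with 0 < φ_t ≤ 1/n and τ·φ_t < 1 for all t. Let F > 0 and suppose Π_{t=0}^{T−1} (1 − φ_t) ≤ F. Then Π_{t=0}^{T−1} (1 − τ·φ_t) ≤ F^{nτ/(n+1)}. -/
/-!
Pointwise, `1 - τ x ≤ exp (-τ x) = (exp (-x)) ^ τ`, and for `0 ≤ x ≤ 1/n` with `n ≥ 2` one has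
`exp (-(n + 1) x) ≤ (1 - x) ^ n`, i.e. `exp (-x) ≤ (1 - x) ^ (n / (n + 1))`. Hence each damped factor
is at most `(1 - x) ^ (n τ / (n + 1))`, and the bound on the undamped product transfers because
`rpow` is multiplicative and monotone on nonnegative reals.
-/

open Real

lemma exp_neg_mul_le_one_sub_pow {n : ℕ} {x : ℝ} (hx₀ : 0 ≤ x) (hx : x ≤ 1 / 2)
    (hnx : n * x ≤ 1) : exp (-((n + 1) * x)) ≤ (1 - x) ^ n := by
  set q := 1 + x + x ^ 2 / 2
  have hq₀ : 0 < q := by positivity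
  have hq : q ≤ exp x := quadratic_le_exp_of_nonneg hx₀
  -- `(1 - x) q = 1 - (x² + x³)/2`, so Bernoulli and `n x ≤ 1` give `((1 - x) q) ^ n ≥ 1 - (x + x²)/2`.
  have hbernoulli : 1 - (x + x ^ 2) / 2 ≤ ((1 - x) * q) ^ n := by
    have h := one_add_mul_le_pow (a := -(x ^ 2 + x ^ 3) / 2) (by nlinarith) n
    have hnx' : (n : ℝ) * (x ^ 2 + x ^ 3) / 2 ≤ (x + x ^ 2) / 2 := by nlinarith
    calc 1 - (x + x ^ 2) / 2 ≤ 1 + n * (-(x ^ 2 + x ^ 3) / 2) := by linarith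
      _ ≤ (1 + -(x ^ 2 + x ^ 3) / 2) ^ n := h
      _ = ((1 - x) * q) ^ n := by ring
  have hone : 1 ≤ (1 - x) ^ n * q ^ (n + 1) :=
    calc (1 : ℝ) ≤ (1 - (x + x ^ 2) / 2) * q := by
          have h := mul_nonneg hx₀ (by linarith : 0 ≤ 1 / 2 - x)
          show 1 ≤ (1 - (x + x ^ 2) / 2) * (1 + x + x ^ 2 / 2)
          nlinarith [mul_nonneg (mul_nonneg hx₀ hx₀) h]
      _ ≤ ((1 - x) * q) ^ n * q := mul_le_mul_of_nonneg_right hbernoulli hq₀.le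
      _ = (1 - x) ^ n * q ^ (n + 1) := by rw [mul_pow, pow_succ]; ring
  have hexp : q ^ (n + 1) ≤ exp ((n + 1) * x) := by
    rw [show ((n : ℝ) + 1) * x = ((n + 1 : ℕ) : ℝ) * x by push_cast; ring, exp_nat_mul]
    exact pow_le_pow_left₀ hq₀.le hq _
  rw [exp_neg, inv_le_iff_one_le_mul₀ (exp_pos _)]
  calc (1 : ℝ) ≤ (1 - x) ^ n * q ^ (n + 1) := hone
    _ ≤ (1 - x) ^ n * exp ((n + 1) * x) := by
        gcongr
        exact pow_nonneg (by linarith) n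

lemma exp_neg_le_one_sub_rpow {n : ℕ} (hn : 2 ≤ n) {x : ℝ} (hx₀ : 0 ≤ x) (hnx : n * x ≤ 1) :
    exp (-x) ≤ (1 - x) ^ ((n : ℝ) / (n + 1)) := by
  have hn' : (2 : ℝ) ≤ n := by exact_mod_cast hn
  have hx : x ≤ 1 / 2 := by nlinarith
  have hroot := rpow_le_rpow (exp_pos _).le (exp_neg_mul_le_one_sub_pow hx₀ hx hnx)
    (by positivity : (0 : ℝ) ≤ 1 / (n + 1))
  rwa [← exp_mul, ← rpow_natCast_mul (by linarith), ← mul_div_assoc, mul_one, neg_div,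
    mul_div_cancel_left₀ _ (by positivity), mul_one_div] at hroot

lemma one_sub_mul_le_one_sub_rpow {n : ℕ} (hn : 2 ≤ n) {x τ : ℝ} (hx₀ : 0 ≤ x)
    (hnx : n * x ≤ 1) (hτ : 0 ≤ τ) :
    1 - τ * x ≤ (1 - x) ^ ((n : ℝ) * τ / (n + 1)) := by
  have hn' : (2 : ℝ) ≤ n := by exact_mod_cast hn
  calc 1 - τ * x ≤ exp (-(τ * x)) := one_sub_le_exp_neg _
    _ = exp (-x) ^ τ := by rw [← exp_mul]; ring_nf
    _ ≤ ((1 - x) ^ ((n : ℝ) / (n + 1))) ^ τ :=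
        rpow_le_rpow (exp_pos _).le (exp_neg_le_one_sub_rpow hn hx₀ hnx) hτ
    _ = (1 - x) ^ ((n : ℝ) * τ / (n + 1)) := by
        rw [← rpow_mul (by nlinarith)]; ring_nf

theorem stmt9_general (n : ℕ) (hn : 2 ≤ n) (τ : ℝ) (hτ : 0 < τ) (T : ℕ)
    (φ : ℕ → ℝ) (hφpos : ∀ t < T, 0 < φ t) (hφub : ∀ t < T, φ t ≤ 1 / (n : ℝ))
    (hτφ : ∀ t < T, τ * φ t < 1)
    (F : ℝ)
    (h : ∏ t ∈ Finset.range T, (1 - φ t) ≤ F) :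
    ∏ t ∈ Finset.range T, (1 - τ * φ t) ≤ F ^ (((n : ℝ) * τ) / ((n : ℝ) + 1)) := by
  have hn' : (2 : ℝ) ≤ n := by exact_mod_cast hn
  have hnφ : ∀ t ∈ Finset.range T, (n : ℝ) * φ t ≤ 1 := fun t ht => by
    have := hφub t (Finset.mem_range.1 ht)
    rwa [le_div_iff₀ (by positivity), mul_comm] at this
  have hφ₁ : ∀ t ∈ Finset.range T, 0 ≤ 1 - φ t := fun t ht => by
    nlinarith [hnφ t ht, hφpos t (Finset.mem_range.1 ht)]
  calc ∏ t ∈ Finset.range T, (1 - τ * φ t)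
      ≤ ∏ t ∈ Finset.range T, (1 - φ t) ^ ((n : ℝ) * τ / (n + 1)) :=
        Finset.prod_le_prod (fun t ht => by linarith [hτφ t (Finset.mem_range.1 ht)])
          fun t ht => one_sub_mul_le_one_sub_rpow hn (hφpos t (Finset.mem_range.1 ht)).le
            (hnφ t ht) hτ.le
    _ = (∏ t ∈ Finset.range T, (1 - φ t)) ^ ((n : ℝ) * τ / (n + 1)) :=
        finsetProd_rpow _ _ hφ₁ _
    _ ≤ F ^ ((n : ℝ) * τ / (n + 1)) :=
        rpow_le_rpow (Finset.prod_nonneg hφ₁) h (by positivity)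

/-- The convergence-rate transfer lemma. -/
theorem stmt9 (n : ℕ) (hn : 2 ≤ n) (τ : ℝ) (hτ : 0 < τ) (T : ℕ)
    (φ : ℕ → ℝ) (hφpos : ∀ t < T, 0 < φ t) (hφub : ∀ t < T, φ t ≤ 1 / (n : ℝ))
    (hτφ : ∀ t < T, τ * φ t < 1)
    (F : ℝ) (hF : 0 < F)
    (h : ∏ t ∈ Finset.range T, (1 - φ t) ≤ F) :
    ∏ t ∈ Finset.range T, (1 - τ * φ t) ≤ F ^ (((n : ℝ) * τ) / ((n : ℝ) + 1)) :=
  stmt9_general n hn τ hτ T φ hφpos hφub hτφ F h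
end

section
/- Let n ∈ ℕ with n ≥ 1, and let φ, τ be reals with 0 < φ ≤ 1/n and 0 < τ ≤ 1. Then (1 − φ)·(1 − ((n−2)/3)·φ·(1−τ)) ≤ (1 − τφ)·(1 − (n/3)·φ·(1−τ)). -/
/-! With `s = φ (1 - τ)` the two sides differ by `s (1 + 2φ - n s) / 3`, and `n s ≤ n φ ≤ 1`. -/

theorem sub_potential_coeff_eq (x φ τ : ℝ) :
    (1 - τ * φ) * (1 - x / 3 * φ * (1 - τ)) - (1 - φ) * (1 - (x - 2) / 3 * φ * (1 - τ))
      = φ * (1 - τ) / 3 * (1 + 2 * φ - x * (φ * (1 - τ))) := by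
  ring

theorem potential_coeff_le (x φ τ : ℝ) (hφ0 : 0 ≤ φ) (hxφ : x * φ ≤ 1) (hτ0 : 0 ≤ τ)
    (hτ1 : τ ≤ 1) :
    (1 - φ) * (1 - (x - 2) / 3 * φ * (1 - τ)) ≤ (1 - τ * φ) * (1 - x / 3 * φ * (1 - τ)) := by
  have hs : 0 ≤ φ * (1 - τ) := mul_nonneg hφ0 (sub_nonneg.2 hτ1)
  have hxs : x * (φ * (1 - τ)) ≤ 1 := by
    rw [← mul_assoc]
    rcases le_total 0 (x * φ) with h | h
    · nlinarith
    · nlinarith [sub_nonneg.2 hτ1]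
  rw [← sub_nonneg, sub_potential_coeff_eq]
  have : 0 ≤ 1 + 2 * φ - x * (φ * (1 - τ)) := by linarith
  positivity

theorem stmt13_general (n : ℕ) (φ τ : ℝ)
    (hφ0 : 0 < φ) (hφ1 : φ ≤ 1 / (n : ℝ)) (hτ0 : 0 < τ) (hτ1 : τ ≤ 1) :
    (1 - φ) * (1 - (((n : ℝ) - 2) / 3) * φ * (1 - τ))
      ≤ (1 - τ * φ) * (1 - ((n : ℝ) / 3) * φ * (1 - τ)) := by
  have hnφ : (n : ℝ) * φ ≤ 1 := by
    rw [mul_comm]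
    exact mul_le_of_le_div₀ zero_le_one n.cast_nonneg hφ1
  exact potential_coeff_le n φ τ hφ0.le hnφ hτ0.le hτ1

/-- The potential-coefficient inequality in the strongly convex case. -/
theorem stmt13 (n : ℕ) (hn : 1 ≤ n) (φ τ : ℝ)
    (hφ0 : 0 < φ) (hφ1 : φ ≤ 1 / (n : ℝ)) (hτ0 : 0 < τ) (hτ1 : τ ≤ 1) :
    (1 - φ) * (1 - (((n : ℝ) - 2) / 3) * φ * (1 - τ))
      ≤ (1 - τ * φ) * (1 - ((n : ℝ) / 3) * φ * (1 - τ)) :=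
  stmt13_general n φ τ hφ0 hφ1 hτ0 hτ1
end

section
/- Let n ∈ ℕ with n ≥ 1, let t₀ ∈ ℝ with t₀ ≥ 2(n+1), let t ∈ ℕ, and set φ_t := 2/(t₀+t) and φ_{t+1} := 2/(t₀+t+1). Let τ, τ̃ be reals with 0 ≤ τ, τ̃ − τ = 1/4 + 1/(8n), and τ̃ < 1. Then ((1 − τ̃·φ_t)/(1 − τ·φ_t))² ≤ φ_{t+1}/φ_t. -/
/-!
Write `s = t₀ + t` and `a = s - 2τ'`. After clearing denominators the claim is
`(s + 1) a² ≤ s (s - 2τ)²`. As `τ' - τ ≥ 1/4` gives `s - 2τ ≥ a + 1/2`, it suffices that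
`a² ≤ s (a + 1/4)`. This quadratic inequality is convex in `a`, so on the range
`s - 2 ≤ a ≤ s - 1/2` allowed by `1/4 ≤ τ' ≤ 1` it follows from the two endpoints, where it
holds once `s ≥ 16/9`.
-/

lemma sq_le_mul_add_quarter {s a : ℝ} (hs : 16 / 9 ≤ s) (ha₁ : s - 2 ≤ a) (ha₂ : a ≤ s - 1 / 2) :
    a ^ 2 ≤ s * (a + 1 / 4) := by
  nlinarith [mul_nonneg (sub_nonneg.2 ha₁) (sub_nonneg.2 ha₂)]

lemma add_one_mul_sq_sub_le {s τ τ' : ℝ} (hs : 16 / 9 ≤ s) (hτ : 0 ≤ τ) (hgap : 1 / 4 ≤ τ' - τ)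
    (hτ' : τ' ≤ 1) : (s + 1) * (s - 2 * τ') ^ 2 ≤ s * (s - 2 * τ) ^ 2 :=
  calc (s + 1) * (s - 2 * τ') ^ 2
      ≤ s * (s - 2 * τ') ^ 2 + s * (s - 2 * τ' + 1 / 4) := by
        nlinarith [sq_le_mul_add_quarter (a := s - 2 * τ') hs (by linarith) (by linarith)]
    _ = s * (s - 2 * τ' + 1 / 2) ^ 2 := by ring
    _ ≤ s * (s - 2 * τ) ^ 2 := by gcongr <;> linarith

lemma sq_one_sub_mul_two_div_div_le {s τ τ' : ℝ} (hs : 16 / 9 ≤ s) (hτ : 0 ≤ τ)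
    (hgap : 1 / 4 ≤ τ' - τ) (hτ' : τ' ≤ 1) :
    ((1 - τ' * (2 / s)) / (1 - τ * (2 / s))) ^ 2 ≤ (2 / (s + 1)) / (2 / s) := by
  have hs₀ : 0 < s := by linarith
  have hτs : 0 < s - 2 * τ := by linarith
  have hlhs : (1 - τ' * (2 / s)) / (1 - τ * (2 / s)) = (s - 2 * τ') / (s - 2 * τ) := by
    field_simp
  have hrhs : (2 / (s + 1)) / (2 / s) = s / (s + 1) := by
    field_simp
  rw [hlhs, hrhs, div_pow, div_le_div_iff₀ (by positivity) (by linarith)]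
  linarith [add_one_mul_sq_sub_le hs hτ hgap hτ']

theorem stmt16_general (n : ℕ) (t₀ : ℝ) (ht₀ : 2 * ((n : ℝ) + 1) ≤ t₀)
    (t : ℕ) (τ τ' : ℝ) (hτ : 0 ≤ τ) (hdiff : τ' - τ = 1 / 4 + 1 / (8 * (n : ℝ)))
    (hτ' : τ' < 1) :
    ((1 - τ' * (2 / (t₀ + (t : ℝ)))) / (1 - τ * (2 / (t₀ + (t : ℝ))))) ^ 2
      ≤ (2 / (t₀ + (t : ℝ) + 1)) / (2 / (t₀ + (t : ℝ))) := by
  have hs : 16 / 9 ≤ t₀ + t := by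
    have : (0 : ℝ) ≤ n := n.cast_nonneg
    have : (0 : ℝ) ≤ t := t.cast_nonneg
    linarith
  have hgap : 1 / 4 ≤ τ' - τ := by
    rw [hdiff]
    linarith [show 0 ≤ 1 / (8 * (n : ℝ)) by positivity]
  exact sq_one_sub_mul_two_div_div_le hs hτ hgap hτ'.le

/-- The step-size ratio inequality from the main non-strongly convex theorem. -/
theorem stmt16 (n : ℕ) (hn : 1 ≤ n) (t₀ : ℝ) (ht₀ : 2 * ((n : ℝ) + 1) ≤ t₀)
    (t : ℕ) (τ τ' : ℝ) (hτ : 0 ≤ τ) (hdiff : τ' - τ = 1 / 4 + 1 / (8 * (n : ℝ)))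
    (hτ' : τ' < 1) :
    ((1 - τ' * (2 / (t₀ + (t : ℝ)))) / (1 - τ * (2 / (t₀ + (t : ℝ))))) ^ 2
      ≤ (2 / (t₀ + (t : ℝ) + 1)) / (2 / (t₀ + (t : ℝ))) :=
  stmt16_general n t₀ ht₀ t τ τ' hτ hdiff hτ'
end

section
/- Let n ∈ ℕ with n ≥ 10, and let φ : ℕ → ℝ satisfy 0 < φ_l ≤ 1/n and φ_{l+1} ≥ (1 − 1/(2n))·φ_l for all l. Then for all integers s < t with t − s ≤ n/10: Π_{l=s+1}^{t−1} (1 − 2·φ_l) ≥ 1 − (1/4)·n·φ_t. -/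
/-!
Iterating `φ (l + 1) ≥ (1 - 1/(2n)) φ l` and applying Bernoulli's inequality gives
`(1 - k/(2n)) φ l ≤ φ (l + k)`, so inside a window of length at most `n/10` every `φ l` is at most
`(20/19) φ t`. The Weierstrass product inequality `∏ (1 - a_l) ≥ 1 - ∑ a_l` then bounds the product
below by `1 - (t - s - 1)(40/19) φ t ≥ 1 - (4/19) n φ t`.
-/

open Finset

theorem Finset.one_sub_sum_le_prod_one_sub {ι R : Type*} [LinearOrder ι] [CommRing R]
    [LinearOrder R] [IsStrictOrderedRing R] (s : Finset ι) {f : ι → R}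
    (h0 : ∀ i ∈ s, 0 ≤ f i) (h1 : ∀ i ∈ s, f i ≤ 1) :
    1 - ∑ i ∈ s, f i ≤ ∏ i ∈ s, (1 - f i) := by
  rw [prod_one_sub_ordered]
  gcongr with i hi
  refine mul_le_of_le_one_right (h0 i hi) (prod_le_one (fun j hj => ?_) fun j hj => ?_)
  · exact sub_nonneg.2 (h1 j (mem_filter.1 hj).1)
  · exact sub_le_self _ (h0 j (mem_filter.1 hj).1)

theorem pow_mul_le_add_of_mul_le_succ {φ : ℕ → ℝ} {c : ℝ} (hc : 0 ≤ c)
    (h : ∀ l, c * φ l ≤ φ (l + 1)) (l k : ℕ) : c ^ k * φ l ≤ φ (l + k) := by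
  induction k with
  | zero => simp
  | succ k ih =>
    calc c ^ (k + 1) * φ l = c * (c ^ k * φ l) := by ring
      _ ≤ c * φ (l + k) := by gcongr
      _ ≤ φ (l + (k + 1)) := h (l + k)

theorem one_sub_div_mul_le_of_ratio {n : ℝ} (hn : 1 / 2 ≤ n) {φ : ℕ → ℝ} (hφ : ∀ l, 0 ≤ φ l)
    (hratio : ∀ l, (1 - 1 / (2 * n)) * φ l ≤ φ (l + 1)) (l k : ℕ) :
    (1 - k / (2 * n)) * φ l ≤ φ (l + k) := by
  have hc : 1 / (2 * n) ≤ 1 := by rw [div_le_one (by linarith)]; linarith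
  have hbernoulli : 1 - k / (2 * n) ≤ (1 - 1 / (2 * n)) ^ k := by
    simpa [sub_eq_add_neg, div_eq_mul_one_div (k : ℝ)] using
      one_add_mul_le_pow (a := -(1 / (2 * n))) (by linarith) k
  calc (1 - k / (2 * n)) * φ l ≤ (1 - 1 / (2 * n)) ^ k * φ l := by gcongr; exact hφ l
    _ ≤ φ (l + k) := pow_mul_le_add_of_mul_le_succ (by linarith) hratio l k

/-- The product lower bound from Case 2 of the proof that the matrices B^t are good. -/
theorem stmt18 (n : ℕ) (hn : 10 ≤ n) (φ : ℕ → ℝ)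
    (hpos : ∀ l, 0 < φ l) (hub : ∀ l, φ l ≤ 1 / (n : ℝ))
    (hratio : ∀ l, φ (l + 1) ≥ (1 - 1 / (2 * (n : ℝ))) * φ l) :
    ∀ s t : ℕ, s < t → ((t : ℝ) - (s : ℝ)) ≤ (n : ℝ) / 10 →
      1 - (1 / 4) * (n : ℝ) * φ t ≤ ∏ l ∈ Finset.Ico (s + 1) t, (1 - 2 * φ l) := by
  intro s t hst hwin
  have hn' : (10 : ℝ) ≤ n := by exact_mod_cast hn
  have hφ_le : ∀ l ∈ Ico (s + 1) t, φ l ≤ 20 / 19 * φ t := by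
    intro l hl
    obtain ⟨hsl, hlt⟩ := mem_Ico.1 hl
    have hk : ((t - l : ℕ) : ℝ) / (2 * n) ≤ 1 / 20 := by
      rw [div_le_iff₀ (by positivity), Nat.cast_sub hlt.le]
      have : (s : ℝ) + 1 ≤ l := by exact_mod_cast hsl
      linarith
    have h := one_sub_div_mul_le_of_ratio (by linarith) (fun l => (hpos l).le) hratio l (t - l)
    rw [Nat.add_sub_cancel' hlt.le] at h
    nlinarith [hpos l]
  have hsum : ∑ l ∈ Ico (s + 1) t, 2 * φ l ≤ 1 / 4 * n * φ t :=
    calc ∑ l ∈ Ico (s + 1) t, 2 * φ l ≤ ∑ l ∈ Ico (s + 1) t, 2 * (20 / 19 * φ t) :=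
          sum_le_sum fun l hl => by linarith [hφ_le l hl]
      _ = ((t - (s + 1) : ℕ) : ℝ) * (40 / 19 * φ t) := by
          rw [sum_const, Nat.card_Ico, nsmul_eq_mul]; ring
      _ ≤ 1 / 4 * n * φ t := by
          rw [Nat.cast_sub hst, Nat.cast_add_one]
          nlinarith [hpos t]
  have hterm : ∀ l, 2 * φ l ≤ 1 := fun l => by
    have : (1 : ℝ) / n ≤ 1 / 10 := by gcongr
    linarith [hub l]
  calc 1 - 1 / 4 * n * φ t ≤ 1 - ∑ l ∈ Ico (s + 1) t, 2 * φ l := by linarith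
    _ ≤ ∏ l ∈ Ico (s + 1) t, (1 - 2 * φ l) :=
        one_sub_sum_le_prod_one_sub _ (fun l _ => by linarith [hpos l]) fun l _ => hterm l
end
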